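/- arXiv:1303.4147 — 4 statements merged into one kernel-verified Lean document; each statement's English description precedes it below -/
import Mathlib

section
/- In G(d,1,2) = Z_d ≀ S_2 with d ≥ 2, let t = (1,0 | id), r = (0,0 | (1 2)), v = t^{d-1} r, and w_i = t^i for 0 ≤ i < d. If 0 ≤ m < 2d, 0 ≤ i, j < d, and v^m w_i = w_j, then m = 0 and i = j. Consequently the 2d^2 elements v^m w_i are pairwise distinct and enumerate all of G(d,1,2), so repeating the edge sequence [t,...,t (d-1 times), r] 2d times gives a Hamiltonian cycle in the Cayley graph of G(d,1,2) with respect to {r,t}. -/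
/-- The wreath product `ZMod m ≀ Sₙ`: elements `(a | σ)` with `a : Fin n → ZMod m`
and `σ` a permutation of `{1,…,n}` (i.e. of `Fin n`). -/
structure W (m n : ℕ) : Type where
  a : Fin n → ZMod m
  p : Equiv.Perm (Fin n)

namespace W

lemma ext' {m n : ℕ} {x y : W m n} (h1 : x.a = y.a) (h2 : x.p = y.p) : x = y := by
  cases x; cases y; cases h1; cases h2; rfl

instance (m n : ℕ) : Mul (W m n) :=
  ⟨fun x y => ⟨fun i => x.a i + y.a (x.p i), y.p * x.p⟩⟩

instance (m n : ℕ) : One (W m n) := ⟨⟨0, 1⟩⟩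

instance (m n : ℕ) : Inv (W m n) :=
  ⟨fun x => ⟨fun i => -(x.a (x.p.symm i)), x.p⁻¹⟩⟩

lemma mul_def {m n : ℕ} (x y : W m n) :
    x * y = ⟨fun i => x.a i + y.a (x.p i), y.p * x.p⟩ := rfl

lemma one_def {m n : ℕ} : (1 : W m n) = ⟨0, 1⟩ := rfl

lemma inv_def {m n : ℕ} (x : W m n) :
    x⁻¹ = ⟨fun i => -(x.a (x.p.symm i)), x.p⁻¹⟩ := rfl

/-- The wreath product group structure, with multiplication
`(a | σ)(b | τ) = (aᵢ + b_{σ(i)} | στ)` (where `στ` means: apply `σ` first). -/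
instance (m n : ℕ) : Group (W m n) where
  mul_assoc x y z := by
    refine ext' (funext fun i => ?_) ?_
    · show (x.a i + y.a (x.p i)) + z.a ((y.p * x.p) i)
        = x.a i + (y.a (x.p i) + z.a (y.p (x.p i)))
      simp [Equiv.Perm.mul_apply, add_assoc]
    · show (z.p * (y.p * x.p)) = (z.p * y.p) * x.p
      exact (mul_assoc _ _ _).symm
  one_mul x := by
    refine ext' (funext fun i => ?_) ?_
    · show 0 + x.a ((1 : Equiv.Perm (Fin _)) i) = x.a i; simp
    · show x.p * 1 = x.p; simp
  mul_one x := by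
    refine ext' (funext fun i => ?_) ?_
    · show x.a i + 0 = x.a i; simp
    · show 1 * x.p = x.p; simp
  inv_mul_cancel x := by
    refine ext' (funext fun i => ?_) ?_
    · simp [mul_def, inv_def, one_def, Equiv.Perm.inv_def]
    · show x.p * x.p⁻¹ = 1; exact mul_inv_cancel x.p

end W

/-- The subgroup of `ZMod m ≀ Sₙ` of elements whose diagonal entries sum to `0 mod e`.
For `m = d*e` this is the imprimitive complex reflection group `G(de,e,n)`. -/
def Gsub (m e n : ℕ) (h : e ∣ m) : Subgroup (W m n) where
  carrier := {x | ZMod.castHom h (ZMod e) (∑ i, x.a i) = 0}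
  one_mem' := by simp [W.one_def]
  mul_mem' := by
    intro x y hx hy
    show ZMod.castHom h (ZMod e) (∑ i, (x.a i + y.a (x.p i))) = 0
    rw [Finset.sum_add_distrib, Equiv.sum_comp x.p y.a, map_add]
    rw [Set.mem_setOf_eq] at hx hy
    rw [hx, hy, add_zero]
  inv_mem' := by
    intro x hx
    show ZMod.castHom h (ZMod e) (∑ i, -(x.a (x.p.symm i))) = 0
    rw [Finset.sum_neg_distrib, Equiv.sum_comp x.p.symm x.a, map_neg]
    rw [Set.mem_setOf_eq] at hx
    rw [hx, neg_zero]

lemma mem_Gsub {m e n : ℕ} (h : e ∣ m) (x : W m n) :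
    x ∈ Gsub m e n h ↔ ZMod.castHom h (ZMod e) (∑ i, x.a i) = 0 := Iff.rfl

/-- The imprimitive complex reflection group `G(de,e,n)`. -/
abbrev Gde (d e n : ℕ) : Subgroup (W (d * e) n) := Gsub (d * e) e n (dvd_mul_left e d)

/-- A Hamiltonian cycle in the (undirected, right) Cayley graph `Γ(G,S)`,
encoded as the list of edge labels (from `S ∪ S⁻¹`) along the cycle starting at `1`:
the partial products visit every element of `G` exactly once and the
total product returns to `1`. -/
def IsHamCycle {G : Type*} [Group G] (S : Set G) (l : List G) : Prop :=
  (∀ x ∈ l, x ∈ S ∨ x⁻¹ ∈ S) ∧ l.prod = 1 ∧ l.length = Nat.card G ∧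
    ((List.range l.length).map fun k => (l.take k).prod).Nodup

/-!
With `v = t^(d-1) r = (-1, 0 | (1 2))` one computes `v^(2k) tⁱ = (i - k, -k | id)` and
`v^(2k+1) tⁱ = (-(k+1), i - k | (1 2))`, so the permutation gives the parity of `m` and the
coordinates then give `k` and `i` modulo `d`: the map `(m, i) ↦ v^m tⁱ` on `[0, 2d) × [0, d)`
is injective, and as `|G(d,1,2)| = 2d²` it is a bijection. The `k`-th partial product of the
edge sequence is `v^(k / d) t^(k % d)`, so the partial products are distinct, and `v^(2d) = 1`
closes the cycle.
-/

namespace List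

variable {α : Type*}

theorem take_flatten_replicate (xs : List α) {m N s : ℕ} (hm : m < N) (hs : s ≤ xs.length) :
    (replicate N xs).flatten.take (m * xs.length + s) = (replicate m xs).flatten ++ xs.take s := by
  obtain ⟨N, rfl⟩ : ∃ N', N = N' + 1 := ⟨N - 1, by omega⟩
  induction m generalizing N with
  | zero => simp [replicate_succ, take_append_of_le_length hs]
  | succ m ih =>
    obtain ⟨N, rfl⟩ : ∃ N', N = N' + 1 := ⟨N - 1, by omega⟩
    rw [replicate_succ, flatten_cons, Nat.succ_mul, Nat.add_right_comm, Nat.add_comm,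
      take_length_add_append, ih _ (by omega), replicate_succ, flatten_cons, append_assoc]

theorem prod_take_flatten_replicate {M : Type*} [Monoid M] (xs : List M) {m N s : ℕ}
    (hm : m < N) (hs : s ≤ xs.length) :
    ((replicate N xs).flatten.take (m * xs.length + s)).prod
      = xs.prod ^ m * (xs.take s).prod := by
  rw [take_flatten_replicate xs hm hs, prod_append, prod_flatten, map_replicate, prod_replicate]

end List

theorem isHamCycle_flatten_replicate {G : Type*} [Group G] {S : Set G} (xs : List G) (N : ℕ)
    (hS : ∀ x ∈ xs, x ∈ S ∨ x⁻¹ ∈ S) (hprod : xs.prod ^ N = 1)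
    (hcard : N * xs.length = Nat.card G)
    (hinj : ∀ m < N, ∀ m' < N, ∀ s < xs.length, ∀ s' < xs.length,
      xs.prod ^ m * (xs.take s).prod = xs.prod ^ m' * (xs.take s').prod → m = m' ∧ s = s') :
    IsHamCycle S (List.replicate N xs).flatten := by
  have hlen : (List.replicate N xs).flatten.length = N * xs.length := by simp
  refine ⟨fun x hx => ?_, ?_, hlen.trans hcard, ?_⟩
  · obtain ⟨ys, hys, hx⟩ := List.mem_flatten.mp hx
    exact hS x (List.eq_of_mem_replicate hys ▸ hx)
  · rw [List.prod_flatten, List.map_replicate, List.prod_replicate, hprod]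
  · rw [hlen]
    refine List.nodup_range.map_on fun k hk k' hk' heq => ?_
    rw [List.mem_range] at hk hk'
    have hn : 0 < xs.length := Nat.pos_of_mul_pos_left (Nat.zero_lt_of_lt hk)
    have prod_take (j : ℕ) (hj : j < N * xs.length) :
        ((List.replicate N xs).flatten.take j).prod
          = xs.prod ^ (j / xs.length) * (xs.take (j % xs.length)).prod := by
      conv_lhs => rw [← Nat.div_add_mod' j xs.length]
      exact List.prod_take_flatten_replicate xs
        ((Nat.div_lt_iff_lt_mul hn).mpr hj) (Nat.mod_lt _ hn).le
    rw [prod_take k hk, prod_take k' hk'] at heq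
    obtain ⟨hdiv, hmod⟩ := hinj _ ((Nat.div_lt_iff_lt_mul hn).mpr hk) _
      ((Nat.div_lt_iff_lt_mul hn).mpr hk') _ (Nat.mod_lt _ hn) _ (Nat.mod_lt _ hn) heq
    rw [← Nat.div_add_mod' k xs.length, ← Nat.div_add_mod' k' xs.length, hdiv, hmod]

namespace W

theorem card_eq (m n : ℕ) : Nat.card (W m n) = m ^ n * n.factorial := by
  let e : W m n ≃ (Fin n → ZMod m) × Equiv.Perm (Fin n) :=
    ⟨fun x => (x.a, x.p), fun y => ⟨y.1, y.2⟩, fun _ => rfl, fun _ => rfl⟩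
  rw [Nat.card_congr e, Nat.card_prod, Nat.card_fun, Nat.card_zmod, Nat.card_perm,
    Nat.card_eq_fintype_card, Fintype.card_fin]

def t (d : ℕ) : W d 2 := ⟨![1, 0], 1⟩

def r (d : ℕ) : W d 2 := ⟨![0, 0], Equiv.swap 0 1⟩

def v (d : ℕ) : W d 2 := ⟨![-1, 0], Equiv.swap 0 1⟩

variable {d : ℕ}

theorem mk_eq_mk_iff {a b : Fin 2 → ZMod d} {σ τ : Equiv.Perm (Fin 2)} :
    (⟨a, σ⟩ : W d 2) = ⟨b, τ⟩ ↔ a 0 = b 0 ∧ a 1 = b 1 ∧ σ = τ := by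
  rw [mk.injEq, funext_iff, Fin.forall_fin_two, and_assoc]

theorem t_pow (i : ℕ) : t d ^ i = ⟨![i, 0], 1⟩ := by
  induction i with
  | zero => rw [pow_zero, one_def, mk_eq_mk_iff]; simp
  | succ i ih => rw [pow_succ, ih, t, mul_def, mk_eq_mk_iff]; simp

theorem t_pow_pred_mul_r [NeZero d] : t d ^ (d - 1) * r d = v d := by
  rw [t_pow, r, v, mul_def, mk_eq_mk_iff]
  simp [Nat.cast_pred (Nat.pos_of_neZero d)]

theorem v_pow_two_mul (k : ℕ) : v d ^ (2 * k) = ⟨![-k, -k], 1⟩ := by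
  induction k with
  | zero => rw [mul_zero, pow_zero, one_def, mk_eq_mk_iff]; simp
  | succ k ih =>
    rw [mul_add_one, pow_add, ih, pow_two, v, mul_def, mul_def, mk_eq_mk_iff]
    simp [add_comm]

theorem v_pow_two_mul_mul_t_pow (k i : ℕ) :
    v d ^ (2 * k) * t d ^ i = ⟨![i - k, -k], 1⟩ := by
  rw [v_pow_two_mul, t_pow, mul_def, mk_eq_mk_iff]
  simp [neg_add_eq_sub]

theorem v_pow_two_mul_add_one_mul_t_pow (k i : ℕ) :
    v d ^ (2 * k + 1) * t d ^ i = ⟨![-(k + 1), i - k], Equiv.swap 0 1⟩ := by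
  rw [pow_succ, v_pow_two_mul, t_pow, v, mul_def, mul_def, mk_eq_mk_iff]
  simp [add_comm, ← sub_eq_add_neg]

theorem v_pow_two_mul_self : v d ^ (2 * d) = 1 := by
  rw [v_pow_two_mul, one_def, mk_eq_mk_iff]
  simp

theorem v_pow_mul_t_pow_inj {m m' i i' : ℕ} (hm : m < 2 * d) (hm' : m' < 2 * d) (hi : i < d)
    (hi' : i' < d) (h : v d ^ m * t d ^ i = v d ^ m' * t d ^ i') : m = m' ∧ i = i' := by
  have cast_inj {a b : ℕ} (ha : a < d) (hb : b < d) (h : (a : ZMod d) = b) : a = b := by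
    rwa [ZMod.natCast_eq_natCast_iff', Nat.mod_eq_of_lt ha, Nat.mod_eq_of_lt hb] at h
  have swap_ne_one : Equiv.swap (0 : Fin 2) 1 ≠ 1 := by decide
  obtain ⟨k, rfl | rfl⟩ := Nat.even_or_odd' m <;>
    obtain ⟨k', rfl | rfl⟩ := Nat.even_or_odd' m' <;>
    simp only [v_pow_two_mul_mul_t_pow, v_pow_two_mul_add_one_mul_t_pow, mk_eq_mk_iff,
      Matrix.cons_val_zero, Matrix.cons_val_one] at h
  · obtain ⟨h0, h1, -⟩ := h
    obtain rfl := cast_inj (by omega) (by omega) (neg_inj.mp h1)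
    exact ⟨rfl, cast_inj hi hi' (sub_left_inj.mp h0)⟩
  · exact absurd h.2.2 swap_ne_one.symm
  · exact absurd h.2.2 swap_ne_one
  · obtain ⟨h0, h1, -⟩ := h
    obtain rfl := cast_inj (by omega) (by omega) (add_right_cancel (neg_inj.mp h0))
    exact ⟨rfl, cast_inj hi hi' (sub_left_inj.mp h1)⟩

theorem exists_eq_v_pow_mul_t_pow [NeZero d] (g : W d 2) :
    ∃ m < 2 * d, ∃ i < d, g = v d ^ m * t d ^ i := by
  let f : Fin (2 * d) × Fin d → W d 2 := fun p => v d ^ (p.1 : ℕ) * t d ^ (p.2 : ℕ)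
  have hf : f.Injective := fun p q h => by
    obtain ⟨h1, h2⟩ := v_pow_mul_t_pow_inj p.1.2 q.1.2 p.2.2 q.2.2 h
    exact Prod.ext (Fin.ext h1) (Fin.ext h2)
  have : Finite (W d 2) := Nat.finite_of_card_ne_zero (by simp [card_eq, NeZero.ne d])
  have hcard : Nat.card (Fin (2 * d) × Fin d) = Nat.card (W d 2) := by
    rw [card_eq, Nat.card_prod, Nat.card_fin, Nat.card_fin, Nat.factorial_two]; ring
  obtain ⟨⟨m, i⟩, rfl⟩ := (hf.bijective_of_nat_card_le hcard.ge).2 g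
  exact ⟨m, m.2, i, i.2, rfl⟩

theorem isHamCycle_t_r [NeZero d] :
    IsHamCycle {r d, t d}
      (List.replicate (2 * d) (List.replicate (d - 1) (t d) ++ [r d])).flatten := by
  have hlen : (List.replicate (d - 1) (t d) ++ [r d]).length = d := by
    simp [Nat.sub_add_cancel (Nat.pos_of_neZero d)]
  have hprod : (List.replicate (d - 1) (t d) ++ [r d]).prod = v d := by
    rw [List.prod_append, List.prod_replicate, List.prod_singleton, t_pow_pred_mul_r]
  have hprod_take {s : ℕ} (hs : s < d) :
      ((List.replicate (d - 1) (t d) ++ [r d]).take s).prod = t d ^ s := by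
    rw [List.take_append_of_le_length (by rw [List.length_replicate]; omega), List.take_replicate,
      Nat.min_eq_left (by omega), List.prod_replicate]
  refine isHamCycle_flatten_replicate _ _ (fun x hx => Or.inl ?_) ?_ ?_ ?_
  · simp only [List.mem_append, List.mem_replicate, List.mem_singleton] at hx
    simp only [Set.mem_insert_iff, Set.mem_singleton_iff]
    tauto
  · rw [hprod, v_pow_two_mul_self]
  · rw [hlen, card_eq, Nat.factorial_two]; ring
  · intro m hm m' hm' s hs s' hs' h
    rw [hlen] at hs hs'
    rw [hprod, hprod_take hs, hprod_take hs'] at h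
    exact v_pow_mul_t_pow_inj hm hm' hs hs' h

end W

/-- Lemma 4.1. In `G(d,1,2) = Z_d ≀ S₂` with `d ≥ 2`, with
`t = (1,0 | id)`, `r = (0,0 | (1 2))`, `v = t^(d-1) r`, `wᵢ = tⁱ` for `0 ≤ i < d`:
if `0 ≤ m < 2d`, `0 ≤ i,j < d` and `v^m wᵢ = w_j`, then `m = 0` and `i = j`;
consequently the `2d²` elements `v^m wᵢ` are pairwise distinct and enumerate all of
`G(d,1,2)`, so repeating the edge sequence `[t,…,t (d-1 times), r]` `2d` times gives a
Hamiltonian cycle in the Cayley graph of `G(d,1,2)` with respect to `{r,t}`. -/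
theorem stmt2 (d : ℕ) (hd : 2 ≤ d)
    (t r : W d 2) (ht : t = ⟨![1, 0], 1⟩) (hr : r = ⟨![0, 0], Equiv.swap 0 1⟩)
    (v : W d 2) (hv : v = t ^ (d - 1) * r)
    (w : ℕ → W d 2) (hw : ∀ i, w i = t ^ i) :
    (∀ m < 2 * d, ∀ i < d, ∀ j < d, v ^ m * w i = w j → m = 0 ∧ i = j) ∧
    (∀ g : W d 2, ∃! p : ℕ × ℕ, p.1 < 2 * d ∧ p.2 < d ∧ g = v ^ p.1 * w p.2) ∧
    IsHamCycle {r, t}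
      (List.flatten (List.replicate (2 * d) (List.replicate (d - 1) t ++ [r]))) := by
  have : NeZero d := ⟨by omega⟩
  obtain rfl : t = W.t d := ht
  obtain rfl : r = W.r d := hr
  obtain rfl : v = W.v d := hv.trans W.t_pow_pred_mul_r
  simp only [hw]
  refine ⟨fun m hm i hi j hj h => ?_, fun g => ?_, W.isHamCycle_t_r⟩
  · rw [← one_mul (W.t d ^ j), ← pow_zero (W.v d)] at h
    exact W.v_pow_mul_t_pow_inj hm (by omega) hi hj h
  · obtain ⟨m, hm, i, hi, rfl⟩ := W.exists_eq_v_pow_mul_t_pow g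
    refine ⟨(m, i), ⟨hm, hi, rfl⟩, fun ⟨m', i'⟩ ⟨hm', hi', h⟩ => ?_⟩
    obtain ⟨rfl, rfl⟩ := W.v_pow_mul_t_pow_inj hm' hm hi' hi h.symm
    rfl
end

section
/- Let G be a group generated by S with Cayley graph Γ(G,S). Suppose C_1 and C_2 are vertex-disjoint cycles in Γ(G,S), r, s ∈ S with rs = sr, and there is a vertex g_1 on C_1 such that (g_1, g_1 s) is an edge of C_1, g_2 := g_1 r is a vertex of C_2, and (g_2, g_2 s) is an edge of C_2. Then there exists a cycle in Γ(G,S) whose vertex set is exactly the union of the vertex sets of C_1 and C_2. -/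
/-- A cycle in the (undirected) Cayley graph `Γ(G,S)`: a base vertex together with a
nonempty closed self-avoiding sequence of steps, each step labeled by an element of
`S ∪ S⁻¹`. -/
structure CGCycle (G : Type*) [Group G] (S : Set G) where
  base : G
  steps : List G
  nonempty : steps ≠ []
  mem_steps : ∀ x ∈ steps, x ∈ S ∨ x⁻¹ ∈ S
  closed : steps.prod = 1
  selfAvoiding : ∀ i < steps.length, ∀ j < steps.length,
    base * (steps.take i).prod = base * (steps.take j).prod → i = j

/-- The vertex set of a cycle in a Cayley graph. -/
def CGCycle.verts {G : Type*} [Group G] {S : Set G} (C : CGCycle G S) : Set G :=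
  {g | ∃ i < C.steps.length, g = C.base * (C.steps.take i).prod}

/-- `(g, g*s)` is an edge of the cycle `C` (traversed in this direction). -/
def CGCycle.hasEdge {G : Type*} [Group G] {S : Set G} (C : CGCycle G S) (g s : G) :
    Prop :=
  ∃ i < C.steps.length, g = C.base * (C.steps.take i).prod ∧ C.steps[i]? = some s

/-!
Represent a cycle by the list of vertices its closed walk visits. Rotate both cycles so that
they start with their `s`-edges, at `g₁` and `g₂ = g₁ * r`. The joined closed walk
`g₁ → g₂ → (second cycle backwards) → g₂ * s → g₂ * s * r⁻¹ = g₁ * s → (first cycle) → g₁`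
visits a permutation of the concatenated vertex lists; since the two cycles are disjoint, this
list has no duplicates, so the walk is a cycle with the required vertex set.
-/

section WalkVertices

variable {G : Type*} [Group G]

/-- The vertices visited by the walk in a Cayley graph that starts at `b` and takes the steps
`l`, endpoint excluded. For a closed walk this is the vertex list of the cycle it traces. -/
@[simp]
def walkVertices (b : G) : List G → List G
  | [] => []
  | x :: l => b :: walkVertices (b * x) l

@[simp]
lemma length_walkVertices (b : G) (l : List G) : (walkVertices b l).length = l.length := by
  induction l generalizing b <;> simp [*]

lemma getElem_walkVertices (b : G) (l : List G) (i : ℕ) (hi : i < (walkVertices b l).length) :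
    (walkVertices b l)[i] = b * (l.take i).prod := by
  induction l generalizing b i with
  | nil => simp at hi
  | cons x l ih =>
    cases i with
    | zero => simp
    | succ i => simp [ih, mul_assoc]

lemma mem_walkVertices {b g : G} {l : List G} :
    g ∈ walkVertices b l ↔ ∃ i < l.length, g = b * (l.take i).prod := by
  simp [List.mem_iff_getElem, getElem_walkVertices, eq_comm]

lemma nodup_walkVertices_iff {b : G} {l : List G} :
    (walkVertices b l).Nodup ↔ ∀ i < l.length, ∀ j < l.length,
      b * (l.take i).prod = b * (l.take j).prod → i = j := by
  constructor
  · intro h i hi j hj hij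
    exact (h.getElem_inj_iff (hi := by simpa) (hj := by simpa)).mp
      (by simpa [getElem_walkVertices] using hij)
  · intro h
    refine List.nodup_iff_injective_getElem.mpr fun i j hij => Fin.ext ?_
    exact h i (by simpa using i.2) j (by simpa using j.2) (by simpa [getElem_walkVertices] using hij)

lemma walkVertices_append (b : G) (l₁ l₂ : List G) :
    walkVertices b (l₁ ++ l₂) = walkVertices b l₁ ++ walkVertices (b * l₁.prod) l₂ := by
  induction l₁ generalizing b <;> simp [*, mul_assoc]

/-- Walking the steps of `l` backwards, from its endpoint, visits the same vertices in the
opposite order. -/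
lemma walkVertices_reverse_inv (b : G) (l : List G) :
    walkVertices (b * l.prod) (l.map (·⁻¹)).reverse ++ [b] =
      (walkVertices b l ++ [b * l.prod]).reverse := by
  induction l generalizing b with
  | nil => simp
  | cons x l ih =>
    have hback : b * x * l.prod * ((l.map (·⁻¹)).reverse).prod = b * x := by
      rw [← List.prod_inv_reverse, mul_inv_cancel_right]
    simp only [List.map_cons, List.reverse_cons, walkVertices_append, List.prod_cons,
      walkVertices, List.append_assoc, List.cons_append, List.reverse_cons, ← ih, ← mul_assoc,
      hback, List.nil_append]

lemma walkVertices_append_comm_perm {b : G} {l₁ l₂ : List G} (h : (l₁ ++ l₂).prod = 1) :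
    (walkVertices (b * l₁.prod) (l₂ ++ l₁)).Perm (walkVertices b (l₁ ++ l₂)) := by
  rw [List.prod_append] at h
  rw [walkVertices_append, walkVertices_append, mul_assoc, h, mul_one]
  exact List.perm_append_comm

end WalkVertices

section Joining

open List

variable {G : Type*} [Group G]

/-- The steps of the joined cycle based at `g`: cross the rung `r` to `g * r`, go round the
second cycle backwards to `g * r * s`, cross back by `r⁻¹` to `g * r * s * r⁻¹ = g * s` and go
round the first cycle back to `g`. -/
def joinSteps (r : G) (T₁ T₂ : List G) : List G :=
  r :: ((T₂.map (·⁻¹)).reverse ++ r⁻¹ :: T₁)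

variable {r s : G} {T₁ T₂ : List G}

lemma forall_mem_joinSteps {S : Set G} (hr : r ∈ S) (h₁ : ∀ x ∈ T₁, x ∈ S ∨ x⁻¹ ∈ S)
    (h₂ : ∀ x ∈ T₂, x ∈ S ∨ x⁻¹ ∈ S) : ∀ x ∈ joinSteps r T₁ T₂, x ∈ S ∨ x⁻¹ ∈ S := by
  intro x hx
  simp only [joinSteps, List.mem_cons, List.mem_append, List.mem_reverse, List.mem_map] at hx
  rcases hx with rfl | ⟨y, hy, rfl⟩ | rfl | hx
  · exact Or.inl hr
  · simpa [or_comm] using h₂ y hy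
  · exact Or.inr (by simpa using hr)
  · exact h₁ x hx

lemma prod_reverse_map_inv_eq (h : s * T₂.prod = 1) : ((T₂.map (·⁻¹)).reverse).prod = s := by
  rw [← List.prod_inv_reverse, eq_inv_of_mul_eq_one_right h, inv_inv]

lemma prod_joinSteps (hcomm : r * s = s * r) (h₁ : s * T₁.prod = 1) (h₂ : s * T₂.prod = 1) :
    (joinSteps r T₁ T₂).prod = 1 := by
  rw [joinSteps, List.prod_cons, List.prod_append, prod_reverse_map_inv_eq h₂, List.prod_cons,
    eq_inv_of_mul_eq_one_right h₁, ← mul_assoc, hcomm]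
  group

lemma walkVertices_joinSteps_perm (g : G) (hcomm : r * s = s * r) (h₂ : s * T₂.prod = 1) :
    (walkVertices g (joinSteps r T₁ T₂)).Perm
      (walkVertices g (s :: T₁) ++ walkVertices (g * r) (s :: T₂)) := by
  have hback := walkVertices_reverse_inv (g * r * s) T₂
  rw [mul_assoc (g * r), h₂, mul_one] at hback
  have hturn : g * r * s * r⁻¹ = g * s := by rw [mul_assoc g, hcomm]; group
  simp only [joinSteps, walkVertices, walkVertices_append, prod_reverse_map_inv_eq h₂, hturn]
  refine List.Perm.cons g ?_
  calc walkVertices (g * r) (T₂.map (·⁻¹)).reverse ++ g * r * s :: walkVertices (g * s) T₁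
      = (walkVertices (g * r * s) T₂ ++ [g * r]).reverse ++ walkVertices (g * s) T₁ := by
        rw [← hback, List.append_assoc, List.singleton_append]
    _ ~ (g * r :: walkVertices (g * r * s) T₂) ++ walkVertices (g * s) T₁ :=
        ((reverse_perm _).trans (perm_append_singleton _ _)).append_right _
    _ ~ walkVertices (g * s) T₁ ++ g * r :: walkVertices (g * r * s) T₂ := perm_append_comm

end Joining

section CGCycle

variable {G : Type*} [Group G] {S : Set G}

lemma CGCycle.verts_eq_walkVertices (C : CGCycle G S) :
    C.verts = {g | g ∈ walkVertices C.base C.steps} := by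
  ext
  exact mem_walkVertices.symm

lemma CGCycle.nodup_walkVertices (C : CGCycle G S) : (walkVertices C.base C.steps).Nodup :=
  nodup_walkVertices_iff.mpr C.selfAvoiding

lemma CGCycle.exists_walkVertices_perm_of_hasEdge {C : CGCycle G S} {g s : G}
    (h : C.hasEdge g s) : ∃ T : List G, (∀ x ∈ T, x ∈ S ∨ x⁻¹ ∈ S) ∧ s * T.prod = 1 ∧
      (walkVertices g (s :: T)).Perm (walkVertices C.base C.steps) := by
  obtain ⟨i, hi, rfl, hsi⟩ := h
  have hdrop : C.steps.drop i = s :: C.steps.drop (i + 1) := by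
    have hsi' : C.steps[i] = s := by simpa [hi] using hsi
    rw [List.drop_eq_getElem_cons hi, hsi']
  have hclosed := C.closed
  rw [← List.take_append_drop i C.steps] at hclosed
  refine ⟨C.steps.drop (i + 1) ++ C.steps.take i, fun x hx => C.mem_steps x ?_, ?_, ?_⟩
  · rcases List.mem_append.mp hx with hx | hx
    exacts [List.mem_of_mem_drop hx, List.mem_of_mem_take hx]
  · rw [← List.prod_cons, ← List.cons_append, ← hdrop, List.prod_append, mul_eq_one_comm,
      ← List.prod_append, hclosed]
  · rw [← List.cons_append, ← hdrop]
    conv_rhs => rw [← List.take_append_drop i C.steps]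
    exact walkVertices_append_comm_perm hclosed

end CGCycle

theorem stmt7_general {G : Type*} [Group G] (S : Set G)
    (C₁ C₂ : CGCycle G S) (hdisj : Disjoint C₁.verts C₂.verts)
    (r s : G) (hr : r ∈ S) (hcomm : r * s = s * r)
    (g₁ : G) (h₁ : C₁.hasEdge g₁ s)
    (h₂ : C₂.hasEdge (g₁ * r) s) :
    ∃ C : CGCycle G S, C.verts = C₁.verts ∪ C₂.verts := by
  obtain ⟨T₁, hT₁S, hT₁, hperm₁⟩ := CGCycle.exists_walkVertices_perm_of_hasEdge h₁
  obtain ⟨T₂, hT₂S, hT₂, hperm₂⟩ := CGCycle.exists_walkVertices_perm_of_hasEdge h₂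
  have hperm := (walkVertices_joinSteps_perm g₁ hcomm hT₂).trans (hperm₁.append hperm₂)
  have hnodup : (walkVertices g₁ (joinSteps r T₁ T₂)).Nodup := by
    refine hperm.nodup_iff.mpr (C₁.nodup_walkVertices.append C₂.nodup_walkVertices ?_)
    rw [C₁.verts_eq_walkVertices, C₂.verts_eq_walkVertices] at hdisj
    exact fun x hx₁ hx₂ => Set.disjoint_left.mp hdisj hx₁ hx₂
  refine ⟨⟨g₁, joinSteps r T₁ T₂, List.cons_ne_nil _ _, forall_mem_joinSteps hr hT₁S hT₂S,
    prod_joinSteps hcomm hT₁ hT₂, nodup_walkVertices_iff.mp hnodup⟩, ?_⟩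
  ext g
  simp only [CGCycle.verts_eq_walkVertices, Set.mem_union, Set.mem_ofPred_eq, hperm.mem_iff,
    List.mem_append]

/-- commutative joining. If `C₁`, `C₂` are vertex-disjoint cycles in
the Cayley graph `Γ(G,S)`, `r, s ∈ S` commute, `(g₁, g₁s)` is an edge of `C₁`,
`g₂ := g₁r` is a vertex of `C₂` and `(g₂, g₂s)` is an edge of `C₂`, then there is a
cycle in `Γ(G,S)` whose vertex set is exactly the union of those of `C₁` and `C₂`. -/
theorem stmt7 {G : Type*} [Group G] (S : Set G) (hS : Subgroup.closure S = ⊤)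
    (C₁ C₂ : CGCycle G S) (hdisj : Disjoint C₁.verts C₂.verts)
    (r s : G) (hr : r ∈ S) (hs : s ∈ S) (hcomm : r * s = s * r)
    (g₁ : G) (h₁ : C₁.hasEdge g₁ s) (h₂v : g₁ * r ∈ C₂.verts)
    (h₂ : C₂.hasEdge (g₁ * r) s) :
    ∃ C : CGCycle G S, C.verts = C₁.verts ∪ C₂.verts :=
  stmt7_general S C₁ C₂ hdisj r s hr hcomm g₁ h₁ h₂
end

section
/- Let G be a finite group with generating set S = {r_1,...,r_n} where r_n has order two, and let H = ⟨r_1,...,r_{n-1}⟩. If the Cayley graph Γ(H, {r_1,...,r_{n-1}}) has a Hamiltonian cycle C_H such that whenever s, t are consecutive edge labels in C_H, at least one of s, t commutes with r_n, then Γ(G, S) has a Hamiltonian cycle. -/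
/-!
Starting from `C_H`, grow a cycle whose vertex set is a union of left cosets of `H`, one coset
at a time, keeping the invariant that of any two cyclically consecutive labels one commutes
with `a = rₙ`. While some coset is missed, there is a visited `x` with `xa` unvisited, because
`H` and `a` generate `G`. By the invariant, one of the two edges at `x` has a label `s ∈ H`
commuting with `a`, and since visited sets are unions of cosets it may be taken to be an edge
`u → us` with `ua` unvisited. Replace it by the detour `u → ua ⇝ uas → us`, where `ua ⇝ uas`
runs through the whole coset `uaH` along a translate of `C_H` (or of its reverse) with an
`s`-edge removed; the last step is an `a`-edge since `uas · a = us a² = us`. Every new pair of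
consecutive labels contains `a` or is consecutive in `C_H`, so the invariant survives.
-/

namespace List
variable {α : Type*} {R : α → α → Prop}

theorem IsChain.cons_append_singleton {a : α} {l : List α} (haR : ∀ x, R a x ∧ R x a)
    (hl : IsChain R l) : IsChain R (a :: (l ++ [a])) := by
  rw [List.isChain_cons, List.isChain_append]
  exact ⟨fun y _ => (haR y).1, hl, isChain_singleton a, fun x _ y hy => by
    simp only [head?_cons, Option.mem_some_iff] at hy; exact hy ▸ (haR x).2⟩

end List

namespace Cycle
variable {α : Type*} {R : α → α → Prop}

theorem chain_append_comm {A B : List α} (h : Chain R (A ++ B : List α)) :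
    Chain R (B ++ A : List α) := by
  rwa [coe_eq_coe.mpr List.isRotated_append] at h

theorem chain_reverse_coe {l : List α} (h : Chain R l) :
    Chain (fun x y => R y x) (l.reverse : List α) := by
  cases l with
  | nil => trivial
  | cons x m =>
    rw [List.reverse_cons, ← coe_cons_eq_coe_append, chain_coe_cons]
    rw [chain_coe_cons, ← List.isChain_reverse] at h
    simpa using h

theorem rel_of_cons_eq_append_singleton {t s : α} {B A : List α}
    (h : Chain R (t :: B : List α)) (e : t :: B = A ++ [s]) : R s t := by
  rw [chain_coe_cons, ← List.cons_append, e, List.append_assoc, List.singleton_append] at h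
  exact List.isChain_pair.mp (h.infix ⟨A, [], by simp⟩)

theorem isChain_of_chain_append_singleton {A : List α} {s : α}
    (h : Chain R (A ++ [s] : List α)) : List.IsChain R A := by
  rw [← coe_cons_eq_coe_append, chain_coe_cons] at h
  exact h.infix ⟨[s], [s], by simp⟩

theorem chain_of_forall_getElem {l : List α}
    (h : ∀ i (hi : i < l.length),
      R l[i] (l[(i + 1) % l.length]'(Nat.mod_lt _ (Nat.zero_lt_of_lt hi)))) :
    Chain R l := by
  rcases eq_or_ne l [] with rfl | hl
  · trivial
  rw [chain_ne_nil R hl, List.isChain_cons, List.isChain_iff_getElem]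
  refine ⟨fun y hy => ?_, fun i hi => ?_⟩
  · have hpos : 0 < l.length := List.length_pos_iff.mpr hl
    have := h (l.length - 1) (by omega)
    simp only [Nat.sub_add_cancel hpos, Nat.mod_self] at this
    rw [List.head?_eq_getElem?, List.getElem?_eq_getElem hpos, Option.mem_some_iff] at hy
    rwa [List.getLast_eq_getElem, ← hy]
  · simpa [Nat.mod_eq_of_lt hi] using h i (by omega)

theorem chain_splice {a : α} {A P : List α} (haR : ∀ x, R a x ∧ R x a)
    (hA : List.IsChain R A) (hP : List.IsChain R P) :
    Chain R (A ++ a :: (P ++ [a]) : List α) := by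
  apply chain_append_comm
  rw [List.cons_append, chain_coe_cons, List.append_assoc, List.append_assoc,
    List.singleton_append, List.isChain_cons_split]
  exact ⟨hP.cons_append_singleton haR, hA.cons_append_singleton haR⟩

end Cycle

namespace CayleyCycle

section Monoid
variable {M N : Type*} [Monoid M] [Monoid N]

def vertices (l : List M) : List M :=
  (List.range l.length).map fun k => (l.take k).prod

@[simp] theorem length_vertices (l : List M) : (vertices l).length = l.length := by
  simp [vertices]

@[simp] theorem vertices_nil : vertices ([] : List M) = [] := rfl

@[simp] theorem vertices_cons (s : M) (l : List M) :
    vertices (s :: l) = 1 :: (vertices l).map (s * ·) := by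
  simp [vertices, List.range_succ_eq_map, List.map_map, Function.comp_def]

theorem vertices_append (A B : List M) :
    vertices (A ++ B) = vertices A ++ (vertices B).map (A.prod * ·) := by
  induction A with
  | nil => simp
  | cons s A ih => simp [ih, Function.comp_def, mul_assoc]

@[simp] theorem vertices_append_singleton (A : List M) (s : M) :
    vertices (A ++ [s]) = vertices A ++ [A.prod] := by
  simp [vertices_append]

theorem vertices_map (f : M →* N) (l : List M) :
    vertices (l.map f) = (vertices l).map f := by
  induction l with
  | nil => rfl
  | cons s l ih => simp [ih, Function.comp_def]

theorem one_mem_vertices {l : List M} (hl : l ≠ []) : 1 ∈ vertices l := by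
  cases l with
  | nil => contradiction
  | cons s l => simp

theorem exists_eq_append_cons_of_mem_vertices {l : List M} {x : M}
    (hx : x ∈ vertices l) : ∃ A t B, l = A ++ t :: B ∧ A.prod = x := by
  obtain ⟨k, hk, rfl⟩ := List.mem_map.mp hx
  have hk : k < l.length := List.mem_range.mp hk
  exact ⟨l.take k, l[k], l.drop (k + 1), by simp, rfl⟩

theorem mem_of_mem_vertices {S : Type*} [SetLike S M] [SubmonoidClass S M] {H : S}
    {l : List M} (hl : ∀ t ∈ l, t ∈ H) {x : M} (hx : x ∈ vertices l) : x ∈ H := by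
  obtain ⟨k, -, rfl⟩ := List.mem_map.mp hx
  exact list_prod_mem fun t ht => hl t (List.mem_of_mem_take ht)

theorem length_le_card_of_nodup_vertices [Finite M] {l : List M} (h : (vertices l).Nodup) :
    l.length ≤ Nat.card M := by
  simpa using Nat.card_le_card_of_injective _ (List.nodup_iff_injective_get.mp h)

theorem mem_vertices_of_length_eq_card [Finite M] {l : List M} (h : (vertices l).Nodup)
    (hcard : l.length = Nat.card M) (x : M) : x ∈ vertices l := by
  obtain ⟨i, rfl⟩ := ((List.nodup_iff_injective_get.mp h).bijective_of_nat_card_le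
    (by simp [hcard])).2 x
  exact List.get_mem _ _

theorem length_eq_card_of_forall_mem_vertices {l : List M} (h : (vertices l).Nodup)
    (hcov : ∀ x, x ∈ vertices l) : l.length = Nat.card M := by
  classical
  simpa using (Nat.card_eq_of_equiv_fin (h.getEquivOfForallMemList _ hcov).symm).symm

end Monoid

variable {G : Type*} [Group G]

theorem vertices_append_comm_perm {A B : List G} (h : (A ++ B).prod = 1) :
    (vertices (B ++ A)).Perm ((vertices (A ++ B)).map (A.prod⁻¹ * ·)) := by
  have hB : B.prod = A.prod⁻¹ := eq_inv_of_mul_eq_one_right (by simpa using h)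
  simp only [vertices_append, hB, List.map_append, List.map_map, Function.comp_def,
    inv_mul_cancel_left, List.map_id']
  exact List.perm_append_comm

theorem mem_vertices_append_comm {A B : List G} (h : (A ++ B).prod = 1) {x : G} :
    x ∈ vertices (B ++ A) ↔ A.prod * x ∈ vertices (A ++ B) := by
  rw [(vertices_append_comm_perm h).mem_iff, List.mem_map]
  constructor
  · rintro ⟨y, hy, rfl⟩
    simpa using hy
  · exact fun hx => ⟨_, hx, inv_mul_cancel_left _ _⟩

theorem nodup_vertices_append_comm {A B : List G} (h : (A ++ B).prod = 1)
    (hnd : (vertices (A ++ B)).Nodup) : (vertices (B ++ A)).Nodup :=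
  (vertices_append_comm_perm h).nodup_iff.mpr (hnd.map (mul_right_injective _))

theorem vertices_reverse_inv_append (l : List G) (x y : G) :
    vertices ((l.map (·⁻¹)).reverse ++ [x]) =
      ((vertices (l ++ [y])).reverse).map (l.prod⁻¹ * ·) := by
  induction l generalizing x y with
  | nil => simp
  | cons s l ih =>
    rw [List.map_cons, List.reverse_cons, vertices_append_singleton, ih, List.cons_append,
      vertices_cons, vertices_append_singleton]
    simp [Function.comp_def, mul_assoc, List.prod_reverse_noncomm]

theorem vertices_reverse_inv_perm {l : List G} (h : l.prod = 1) :
    (vertices (l.map (·⁻¹)).reverse).Perm (vertices l) := by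
  cases l with
  | nil => simp
  | cons s l =>
    have hs : l.prod⁻¹ = s := (eq_inv_of_mul_eq_one_left (by simpa using h)).symm
    simp only [List.map_cons, List.reverse_cons, vertices_reverse_inv_append l _ s, hs,
      vertices_cons]
    refine ((List.reverse_perm _).map _).trans ?_
    simp [← hs]

theorem mem_vertices_cons {t : G} {B : List G} (h : (t :: B).prod = 1) :
    t ∈ vertices (t :: B) := by
  cases B with
  | nil => simpa using h
  | cons u B => simp

theorem inv_mem_vertices_append_singleton {A : List G} {s : G} (h : (A ++ [s]).prod = 1) :
    s⁻¹ ∈ vertices (A ++ [s]) := by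
  rw [vertices_append_singleton, ← eq_inv_of_mul_eq_one_left (by simpa using h)]
  exact List.mem_append_right _ (List.mem_singleton_self _)

theorem exists_mul_not_mem {H : Subgroup G} {a : G} (ha : a * a = 1)
    (hgen : Subgroup.closure (insert a (H : Set G)) = ⊤) {V : Set G}
    (hV : ∀ x ∈ V, ∀ h ∈ H, x * h ∈ V) {x g : G} (hx : x ∈ V) (hg : g ∉ V) :
    ∃ y ∈ V, y * a ∉ V := by
  by_contra! hVa
  have hclosed : ∀ k ∈ Subgroup.closure (insert a (H : Set G)), ∀ y ∈ V, y * k ∈ V := by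
    intro k hk
    induction hk using Subgroup.closure_induction'' with
    | mem k hk =>
      rcases hk with rfl | hk
      exacts [hVa, fun y hy => hV y hy k hk]
    | inv_mem k hk =>
      rcases hk with rfl | hk
      · rwa [inv_eq_of_mul_eq_one_right ha]
      · exact fun y hy => hV y hy _ (inv_mem hk)
    | one => simp
    | mul k₁ k₂ _ _ ih₁ ih₂ =>
      exact fun y hy => by simpa [mul_assoc] using ih₂ _ (ih₁ y hy)
  exact hg (by simpa using hclosed (x⁻¹ * g) (hgen ▸ Subgroup.mem_top _) x hx)

structure IsCosetCycle (H : Subgroup G) (a : G) (L : Set G) (l : List G) : Prop where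
  prod_eq_one : l.prod = 1
  nodup : (vertices l).Nodup
  mul_mem : ∀ x ∈ vertices l, ∀ h ∈ H, x * h ∈ vertices l
  mem : ∀ t ∈ l, t = a ∨ t ∈ L
  chain : Cycle.Chain (fun s t => Commute s a ∨ Commute t a) (l : Cycle G)

-- `P` is a Hamiltonian path of `H` from `1` to `s`: the detour through a new coset.
def HasSplicePaths (H : Subgroup G) (a : G) (L : Set G) : Prop :=
  ∀ s ∈ L, ∃ P, IsCosetCycle H a L (P ++ [s⁻¹]) ∧ ∀ t ∈ P, t ∈ L

namespace IsCosetCycle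
variable {H : Subgroup G} {a : G} {L : Set G}

theorem append_comm {A B : List G} (h : IsCosetCycle H a L (A ++ B)) :
    IsCosetCycle H a L (B ++ A) where
  prod_eq_one := by simpa [mul_eq_one_comm] using h.prod_eq_one
  nodup := nodup_vertices_append_comm h.prod_eq_one h.nodup
  mul_mem x hx k hk := by
    rw [mem_vertices_append_comm h.prod_eq_one] at hx ⊢
    simpa [mul_assoc] using h.mul_mem _ hx k hk
  mem t ht := h.mem t (by simp only [List.mem_append] at ht ⊢; tauto)
  chain := Cycle.chain_append_comm h.chain

theorem reverse_inv (ha : a * a = 1) (hL : ∀ t ∈ L, t⁻¹ ∈ L) {l : List G}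
    (h : IsCosetCycle H a L l) : IsCosetCycle H a L (l.map (·⁻¹)).reverse where
  prod_eq_one := by rw [← List.prod_inv_reverse, h.prod_eq_one, inv_one]
  nodup := (vertices_reverse_inv_perm h.prod_eq_one).nodup_iff.mpr h.nodup
  mul_mem x hx k hk := by
    rw [(vertices_reverse_inv_perm h.prod_eq_one).mem_iff] at hx ⊢
    exact h.mul_mem x hx k hk
  mem t ht := by
    obtain ⟨s, hs, rfl⟩ := List.mem_map.mp (List.mem_reverse.mp ht)
    rcases h.mem s hs with rfl | hs
    exacts [Or.inl (inv_eq_of_mul_eq_one_right ha), Or.inr (hL s hs)]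
  chain := by
    have := Cycle.chain_reverse_coe h.chain
    rw [← List.map_reverse, ← Cycle.map_coe, Cycle.chain_map]
    exact this.imp fun s t hst => by simpa only [Commute.inv_left_iff, or_comm] using hst

theorem splice (ha : a * a = 1) (hLH : ∀ t ∈ L, t ∈ H) {A P : List G} {s : G}
    (hl : IsCosetCycle H a L (A ++ [s])) (hc : IsCosetCycle H a L (P ++ [s⁻¹]))
    (hPL : ∀ t ∈ P, t ∈ L) (hs : Commute s a) (hAa : A.prod * a ∉ vertices (A ++ [s])) :
    IsCosetCycle H a L (A ++ a :: (P ++ [a])) := by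
  have hA : A.prod = s⁻¹ := eq_inv_of_mul_eq_one_left (by simpa using hl.prod_eq_one)
  have hP : P.prod = s := by simpa [mul_inv_eq_one] using hc.prod_eq_one
  -- The edge `s⁻¹ → 1` becomes the detour `s⁻¹ → s⁻¹a ⇝ s⁻¹as = a → 1` through `s⁻¹aH`.
  have hverts : vertices (A ++ a :: (P ++ [a])) =
      vertices (A ++ [s]) ++ (vertices (P ++ [s⁻¹])).map (A.prod * a * ·) := by
    simp [vertices_append, Function.comp_def, mul_assoc]
  have hcH : ∀ y ∈ vertices (P ++ [s⁻¹]), y ∈ H := by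
    have hPH : ∀ t ∈ P, t ∈ H := fun t ht => hLH t (hPL t ht)
    refine fun y => mem_of_mem_vertices fun t ht => ?_
    rcases List.mem_append.mp ht with ht | ht
    · exact hPH t ht
    · rw [List.mem_singleton.mp ht, ← hP]
      exact inv_mem (H.list_prod_mem hPH)
  refine ⟨?_, ?_, ?_, ?_, ?_⟩
  · simp [hA, hP, hs.eq, ← mul_assoc, ha]
  · rw [hverts]
    refine hl.nodup.append (hc.nodup.map (mul_right_injective _)) ?_
    intro x hx hx'
    obtain ⟨y, hy, rfl⟩ := List.mem_map.mp hx'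
    exact hAa (by simpa using hl.mul_mem _ hx _ (inv_mem (hcH y hy)))
  · rw [hverts]
    intro x hx k hk
    rcases List.mem_append.mp hx with hx | hx
    · exact List.mem_append_left _ (hl.mul_mem x hx k hk)
    · obtain ⟨y, hy, rfl⟩ := List.mem_map.mp hx
      exact List.mem_append_right _
        (List.mem_map.mpr ⟨_, hc.mul_mem y hy k hk, by simp [mul_assoc]⟩)
  · intro t ht
    simp only [List.mem_append, List.mem_cons, List.not_mem_nil, or_false] at ht
    rcases ht with ht | ht | ht | ht
    · exact hl.mem t (List.mem_append_left _ ht)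
    · exact Or.inl ht
    · exact Or.inr (hPL t ht)
    · exact Or.inl ht
  · exact Cycle.chain_splice (fun x => ⟨Or.inl (Commute.refl a), Or.inr (Commute.refl a)⟩)
      (Cycle.isChain_of_chain_append_singleton hl.chain)
      (Cycle.isChain_of_chain_append_singleton hc.chain)

theorem exists_longer_of_edge (ha : a * a = 1) (hLH : ∀ t ∈ L, t ∈ H)
    (hpaths : HasSplicePaths H a L)
    {A B : List G} {s : G} (h : IsCosetCycle H a L (A ++ s :: B)) (hsL : s ∈ L)
    (hs : Commute s a) (hAa : A.prod * a ∉ vertices (A ++ s :: B)) :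
    ∃ l', IsCosetCycle H a L l' ∧ (A ++ s :: B).length < l'.length := by
  have h' : IsCosetCycle H a L (A ++ [s] ++ B) := by simpa using h
  have hrot : IsCosetCycle H a L (B ++ A ++ [s]) := by simpa using h'.append_comm
  obtain ⟨P, hP, hPL⟩ := hpaths s hsL
  refine ⟨_, hrot.splice ha hLH hP hPL hs ?_,
    by simp only [List.length_append, List.length_cons]; omega⟩
  have hBA : (B ++ A).prod = s⁻¹ :=
    eq_inv_of_mul_eq_one_left (by simpa [mul_assoc] using hrot.prod_eq_one)
  rw [hBA, List.append_assoc, mem_vertices_append_comm h'.prod_eq_one]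
  simpa [mul_assoc] using hAa

theorem exists_longer_of_not_mem (ha : a * a = 1) (hLH : ∀ t ∈ L, t ∈ H)
    (hpaths : HasSplicePaths H a L)
    {l : List G} (h : IsCosetCycle H a L l) (hl : l ≠ []) (ha₁ : a ∉ vertices l) :
    ∃ l', IsCosetCycle H a L l' ∧ l.length < l'.length := by
  have hmem : ∀ t ∈ l, t ∈ vertices l ∨ t⁻¹ ∈ vertices l → t ∈ L := by
    intro t ht hv
    refine (h.mem t ht).resolve_left ?_
    rintro rfl
    rw [inv_eq_of_mul_eq_one_right ha, or_self] at hv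
    exact ha₁ hv
  -- `t` is the label leaving `1`, `s` the one entering it.
  obtain ⟨t, B, rfl⟩ := List.exists_cons_of_ne_nil hl
  obtain ⟨A, s, e⟩ := (List.eq_nil_or_concat' (t :: B)).resolve_left (List.cons_ne_nil t B)
  rcases Cycle.rel_of_cons_eq_append_singleton h.chain e with hs | ht
  · rw [e] at h ha₁ hmem ⊢
    have hsL := hmem s (by simp) (Or.inr (inv_mem_vertices_append_singleton h.prod_eq_one))
    have hA : A.prod = s⁻¹ := eq_inv_of_mul_eq_one_left (by simpa using h.prod_eq_one)
    refine (show IsCosetCycle H a L (A ++ s :: []) from h).exists_longer_of_edge ha hLH hpaths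
      hsL hs ?_
    rw [hA, hs.inv_left.eq]
    intro has
    exact ha₁ (by simpa using h.mul_mem _ has s (hLH s hsL))
  · refine (show IsCosetCycle H a L ([] ++ t :: B) from h).exists_longer_of_edge ha hLH hpaths
      (hmem t (by simp) (Or.inl (mem_vertices_cons h.prod_eq_one))) ht ?_
    simpa using ha₁

theorem exists_longer (ha : a * a = 1) (hLH : ∀ t ∈ L, t ∈ H)
    (hpaths : HasSplicePaths H a L)
    (hgen : Subgroup.closure (insert a (H : Set G)) = ⊤)
    {l : List G} (h : IsCosetCycle H a L l) (hl : l ≠ []) {g : G} (hg : g ∉ vertices l) :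
    ∃ l', IsCosetCycle H a L l' ∧ l.length < l'.length := by
  obtain ⟨y, hy, hya⟩ := exists_mul_not_mem ha hgen (V := {x | x ∈ vertices l}) h.mul_mem
    (one_mem_vertices hl) hg
  obtain ⟨A, t, B, rfl, rfl⟩ := exists_eq_append_cons_of_mem_vertices hy
  obtain ⟨l', hl', hlen⟩ := h.append_comm.exists_longer_of_not_mem ha hLH hpaths (by simp)
    (by rw [mem_vertices_append_comm h.prod_eq_one]; exact hya)
  refine ⟨l', hl', ?_⟩
  simp only [List.cons_append, List.length_cons, List.length_append] at hlen ⊢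
  omega

theorem exists_forall_mem_vertices [Finite G] (ha : a * a = 1) (hLH : ∀ t ∈ L, t ∈ H)
    (hpaths : HasSplicePaths H a L)
    (hgen : Subgroup.closure (insert a (H : Set G)) = ⊤)
    {l : List G} (h : IsCosetCycle H a L l) (hl : l ≠ []) :
    ∃ l', IsCosetCycle H a L l' ∧ ∀ g, g ∈ vertices l' := by
  by_cases hcov : ∀ g, g ∈ vertices l
  · exact ⟨l, h, hcov⟩
  obtain ⟨g, hg⟩ := not_forall.mp hcov
  obtain ⟨l', hl', hlen⟩ := h.exists_longer ha hLH hpaths hgen hl hg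
  have hcard := length_le_card_of_nodup_vertices hl'.nodup
  exact hl'.exists_forall_mem_vertices ha hLH hpaths hgen (List.ne_nil_of_length_pos (by omega))
termination_by Nat.card G - l.length
decreasing_by omega

theorem exists_append_inv {c : List G} (h : IsCosetCycle H a L c) (hcL : ∀ t ∈ c, t ∈ L)
    {s : G} (hs : s⁻¹ ∈ c) :
    ∃ P, IsCosetCycle H a L (P ++ [s⁻¹]) ∧ ∀ t ∈ P, t ∈ L := by
  obtain ⟨X, Y, rfl⟩ := List.append_of_mem hs
  have h' : IsCosetCycle H a L (X ++ [s⁻¹] ++ Y) := by simpa using h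
  refine ⟨Y ++ X, by simpa using h'.append_comm, fun t ht => hcL t ?_⟩
  simp only [List.mem_append, List.mem_cons] at ht ⊢
  tauto

theorem hasSplicePaths {c : List G} (ha : a * a = 1)
    (h : IsCosetCycle H a {t | t ∈ c ∨ t⁻¹ ∈ c} c) :
    HasSplicePaths H a {t | t ∈ c ∨ t⁻¹ ∈ c} := by
  rintro s (hs | hs)
  · refine (h.reverse_inv ha ?_).exists_append_inv (fun t ht => ?_) (by simpa using hs)
    · rintro t (ht | ht)
      exacts [Or.inr (by simpa using ht), Or.inl ht]
    · obtain ⟨x, hx, rfl⟩ := List.mem_map.mp (List.mem_reverse.mp ht)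
      exact Or.inr (by simpa using hx)
  · exact h.exists_append_inv (fun t ht => Or.inl ht) hs

end IsCosetCycle

theorem isCosetCycle_map_subtype [Finite G] {H : Subgroup G} {a : G} {L : Set G} {T : Set H}
    {c : List H} (hc : IsHamCycle T c)
    (hcomm : Cycle.Chain (fun s t : H => Commute (s : G) a ∨ Commute (t : G) a) (c : Cycle H))
    (hcL : ∀ t ∈ c, (t : G) ∈ L) : IsCosetCycle H a L (c.map H.subtype) := by
  obtain ⟨-, hc1, hcard, hnd⟩ := hc
  refine ⟨?_, ?_, fun x hx k hk => ?_, fun t ht => Or.inr ?_, ?_⟩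
  · rw [← map_list_prod, hc1, map_one]
  · rw [vertices_map]
    exact hnd.map H.subtype_injective
  · rw [vertices_map] at hx ⊢
    obtain ⟨y, -, rfl⟩ := List.mem_map.mp hx
    exact List.mem_map.mpr ⟨y * ⟨k, hk⟩, mem_vertices_of_length_eq_card hnd hcard _, rfl⟩
  · obtain ⟨x, hx, rfl⟩ := List.mem_map.mp ht
    exact hcL x hx
  · rw [← Cycle.map_coe, Cycle.chain_map]
    exact hcomm

theorem exists_isHamCycle_of_isHamCycle_subgroup [Finite G] {S : Set G} {H : Subgroup G}
    {a : G} (haS : a ∈ S) (ha : a * a = 1)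
    (hgen : Subgroup.closure (insert a (H : Set G)) = ⊤) {T : Set H}
    (hT : ∀ t ∈ T, (t : G) ∈ S) {c : List H} (hc : IsHamCycle T c)
    (hcomm : Cycle.Chain (fun s t : H => Commute (s : G) a ∨ Commute (t : G) a) (c : Cycle H)) :
    ∃ l, IsHamCycle S l := by
  set c' := c.map H.subtype
  have hcS : ∀ t ∈ c', t ∈ S ∨ t⁻¹ ∈ S := by
    intro t ht
    obtain ⟨x, hx, rfl⟩ := List.mem_map.mp ht
    exact (hc.1 x hx).imp (hT x) (hT _)
  have hLH : ∀ t ∈ {t | t ∈ c' ∨ t⁻¹ ∈ c'}, t ∈ H := by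
    rintro t (ht | ht) <;> obtain ⟨x, -, hx⟩ := List.mem_map.mp ht
    exacts [hx ▸ x.2, inv_mem_iff.mp (hx ▸ x.2)]
  have hcyc : IsCosetCycle H a {t | t ∈ c' ∨ t⁻¹ ∈ c'} c' :=
    isCosetCycle_map_subtype hc hcomm fun t ht => Or.inl (List.mem_map_of_mem ht)
  have hne : c' ≠ [] := by
    rw [← List.length_pos_iff, List.length_map, hc.2.2.1]
    exact Nat.card_pos
  obtain ⟨l, hl, hcov⟩ :=
    hcyc.exists_forall_mem_vertices ha hLH (hcyc.hasSplicePaths ha) hgen hne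
  refine ⟨l, fun t ht => ?_, hl.prod_eq_one, length_eq_card_of_forall_mem_vertices hl.nodup hcov,
    hl.nodup⟩
  rcases hl.mem t ht with rfl | ht | ht
  exacts [Or.inl haS, hcS t ht, by simpa [or_comm] using hcS _ ht]

end CayleyCycle

/-- Proposition 3.5. Let `G` be a finite group with generating set
`S = {r₁,…,rₙ}` where `rₙ` has order two, and let `H = ⟨r₁,…,r_{n-1}⟩`. If the Cayley
graph `Γ(H, {r₁,…,r_{n-1}})` has a Hamiltonian cycle `C_H` (encoded as a cyclic list
`lH` of edge labels) such that whenever `s, t` are (cyclically) consecutive edge labels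
in `C_H`, at least one of `s, t` commutes with `rₙ`, then `Γ(G,S)` has a Hamiltonian
cycle. -/
theorem stmt8 {G : Type*} [Group G] [Finite G] (n : ℕ) (r : Fin (n + 1) → G)
    (hgen : Subgroup.closure (Set.range r) = ⊤)
    (hord : orderOf (r (Fin.last n)) = 2)
    (H : Subgroup G)
    (hH : H = Subgroup.closure (Set.range fun i : Fin n => r i.castSucc))
    (lH : List H)
    (hCH : IsHamCycle {x : H | ∃ i : Fin n, (x : G) = r i.castSucc} lH)
    (hcons : ∀ i : Fin lH.length,
      Commute (lH.get i : G) (r (Fin.last n)) ∨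
      Commute (lH.get ⟨((i : ℕ) + 1) % lH.length, Nat.mod_lt _ i.pos⟩ : G) (r (Fin.last n))) :
    ∃ l : List G, IsHamCycle (Set.range r) l := by
  have hinv : r (Fin.last n) * r (Fin.last n) = 1 := by
    rw [← pow_two, ← hord, pow_orderOf_eq_one]
  have hrange : Set.range r ⊆ insert (r (Fin.last n)) (H : Set G) := by
    rintro _ ⟨i, rfl⟩
    induction i using Fin.lastCases with
    | last => exact Set.mem_insert _ _
    | cast j => exact Or.inr (hH ▸ Subgroup.subset_closure ⟨j, rfl⟩)
  exact CayleyCycle.exists_isHamCycle_of_isHamCycle_subgroup (Set.mem_range_self _) hinv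
    (eq_top_mono (Subgroup.closure_mono hrange) hgen)
    (by rintro _ ⟨i, hi⟩; exact ⟨i.castSucc, hi.symm⟩) hCH
    (Cycle.chain_of_forall_getElem fun i hi => hcons ⟨i, hi⟩)
end

section
/- Let G be a finite group with generating set S = {r_1,...,r_n} where r_n has order two, let H = ⟨r_1,...,r_{n-1}⟩, let Γ_1,...,Γ_k be the components of the Cayley graph Γ(G, S \ {r_n}) (whose vertex sets are the left cosets of H), and let c(i,j) be the number of edges of Γ(G,S) labeled r_n joining Γ_i and Γ_j. If Γ(H, S \ {r_n}) has a Hamiltonian cycle C_H such that the number of positions in C_H at which two consecutive edge labels both fail to commute with r_n is strictly less than c(i,j) for every pair (i,j) with c(i,j) > 0, then Γ(G,S) has a Hamiltonian cycle. -/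
/-!
A Hamiltonian cycle is handled through its successor permutation `σ`, a single cycle whose steps
`x ↦ σ x` are edges of the Cayley graph. Left translates of `C_H` are Hamiltonian cycles of the
cosets of `H`, and we splice in one coset at a time. If the cycle built so far runs through the
cosets in `W`, `g` lies in one of them and `g rₙ` does not, then more than `bad` edges labelled
`rₙ` join the two cosets, so one of their endpoints `x` is not bad: some edge `{x, x s}` of the
translate of `C_H` at `x` has a label `s` commuting with `rₙ`. Then `{x rₙ, x rₙ s}` is an edge of
a translate of `C_H` on the new coset, and exchanging the edges `{x, x s}` and `{x rₙ, x rₙ s}` for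
the `rₙ`-edges `{x, x rₙ}` and `{x s, x rₙ s}` merges the two cycles. For `{x, x s}` to be still
available, the invariant keeps in every visited coset all commuting edges of its translate of `C_H`
whose `rₙ`-neighbours lie in unvisited cosets; a splice only destroys edges whose `rₙ`-neighbours
lie in the coset it adds.
-/

open Equiv

namespace Equiv.Perm

section Merge

variable {α : Type*} {σ τ π : Perm α} {U V : Set α} {u v x y : α}

def Adj (σ : Perm α) (x y : α) : Prop := σ x = y ∨ σ y = x

theorem sameCycle_of_pow_apply_eq_of_eqOn (hσU : Set.MapsTo σ U U)
    (hπ : ∀ x ∈ U, x ≠ u → π x = σ x) (n : ℕ) :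
    ∀ y ∈ U, (σ ^ n) y = u → π.SameCycle y u := by
  induction n with
  | zero =>
    rintro y - rfl
    rfl
  | succ n ih =>
    intro y hy hn
    by_cases hyu : y = u
    · rw [hyu]
    · rw [pow_succ, mul_apply] at hn
      have h := ih _ (hσU hy) hn
      rw [← hπ y hy hyu] at h
      exact sameCycle_apply_left.mp h

variable [DecidableEq α]

theorem mul_mul_swap_apply_of_notMem_right (hτ : ∀ x ∉ V, τ x = x) (hv : v ∈ V)
    (hx : x ∉ V) (hxu : x ≠ u) : (σ * τ * swap u v) x = σ x := by
  rw [mul_apply, swap_apply_of_ne_of_ne hxu fun h => hx (h ▸ hv), mul_apply, hτ x hx]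

theorem mul_mul_swap_apply_of_notMem_left (hUV : _root_.Disjoint U V)
    (hσ : ∀ x ∉ U, σ x = x) (hτ : ∀ x ∉ V, τ x = x) (hτV : Set.MapsTo τ V V) (hu : u ∈ U)
    (hx : x ∉ U) (hxv : x ≠ v) : (σ * τ * swap u v) x = τ x := by
  have hτx : τ x ∉ U := by
    by_cases hxV : x ∈ V
    · exact Set.disjoint_right.mp hUV (hτV hxV)
    · rwa [hτ x hxV]
  rw [mul_apply, swap_apply_of_ne_of_ne (fun h : x = u => hx (h ▸ hu)) hxv, mul_apply,
    hσ _ hτx]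

theorem mul_mul_swap_apply_left (hUV : _root_.Disjoint U V) (hσ : ∀ x ∉ U, σ x = x)
    (hτV : Set.MapsTo τ V V) (hv : v ∈ V) : (σ * τ * swap u v) u = τ v := by
  rw [mul_apply, swap_apply_left, mul_apply, hσ _ (Set.disjoint_right.mp hUV (hτV hv))]

theorem mul_mul_swap_apply_right (hUV : _root_.Disjoint U V) (hτ : ∀ x ∉ V, τ x = x)
    (hu : u ∈ U) : (σ * τ * swap u v) v = σ u := by
  rw [mul_apply, swap_apply_right, mul_apply, hτ u (Set.disjoint_left.mp hUV hu)]

theorem IsCycleOn.mul_mul_swap [Finite α] (hσc : σ.IsCycleOn U) (hτc : τ.IsCycleOn V)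
    (hUV : _root_.Disjoint U V) (hσ : ∀ x ∉ U, σ x = x) (hτ : ∀ x ∉ V, τ x = x) (hu : u ∈ U)
    (hv : v ∈ V) : (σ * τ * swap u v).IsCycleOn (U ∪ V) := by
  set π := σ * τ * swap u v
  have hπU : ∀ x ∈ U, x ≠ u → π x = σ x := fun x hx =>
    mul_mul_swap_apply_of_notMem_right hτ hv (Set.disjoint_left.mp hUV hx)
  have hπV : ∀ x ∈ V, x ≠ v → π x = τ x := fun x hx =>
    mul_mul_swap_apply_of_notMem_left hUV hσ hτ hτc.1.mapsTo hu (Set.disjoint_right.mp hUV hx)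
  have hπu : π u = τ v := mul_mul_swap_apply_left hUV hσ hτc.1.mapsTo hv
  have hπv : π v = σ u := mul_mul_swap_apply_right hUV hτ hu
  have toU : ∀ y ∈ U, π.SameCycle y u := fun y hy => by
    obtain ⟨n, -, hn⟩ := (hσc.2 hy hu).exists_pow_eq'
    exact sameCycle_of_pow_apply_eq_of_eqOn hσc.1.mapsTo hπU n y hy hn
  have toV : ∀ y ∈ V, π.SameCycle y v := fun y hy => by
    obtain ⟨n, -, hn⟩ := (hτc.2 hy hv).exists_pow_eq'
    exact sameCycle_of_pow_apply_eq_of_eqOn hτc.1.mapsTo hπV n y hy hn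
  have hvu : π.SameCycle v u := sameCycle_apply_left.mp (hπv ▸ toU _ (hσc.1.mapsTo hu))
  have toUV : ∀ y ∈ U ∪ V, π.SameCycle y u := by
    rintro y (hy | hy)
    exacts [toU y hy, (toV y hy).trans hvu]
  have hmaps : Set.MapsTo π (U ∪ V) (U ∪ V) := by
    rintro x (hx | hx)
    · obtain rfl | hxu := eq_or_ne x u
      · exact hπu ▸ Or.inr (hτc.1.mapsTo hv)
      · exact hπU x hx hxu ▸ Or.inl (hσc.1.mapsTo hx)
    · obtain rfl | hxv := eq_or_ne x v
      · exact hπv ▸ Or.inl (hσc.1.mapsTo hu)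
      · exact hπV x hx hxv ▸ Or.inr (hτc.1.mapsTo hx)
  exact ⟨((Set.toFinite _).injOn_iff_bijOn_of_mapsTo hmaps).mp π.injective.injOn,
    fun x hx y hy => (toUV x hx).trans (toUV y hy).symm⟩

theorem Adj.mul_mul_swap_of_notMem_right (h : σ.Adj x y) (hτ : ∀ x ∉ V, τ x = x)
    (hv : v ∈ V) (hx : x ∉ V) (hy : y ∉ V) (hxu : x ≠ u) (hyu : y ≠ u) :
    (σ * τ * swap u v).Adj x y := by
  rcases h with h | h
  · exact Or.inl (by rw [mul_mul_swap_apply_of_notMem_right hτ hv hx hxu, h])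
  · exact Or.inr (by rw [mul_mul_swap_apply_of_notMem_right hτ hv hy hyu, h])

theorem Adj.mul_mul_swap_of_notMem_left (h : τ.Adj x y) (hUV : _root_.Disjoint U V)
    (hσ : ∀ x ∉ U, σ x = x) (hτ : ∀ x ∉ V, τ x = x) (hτV : Set.MapsTo τ V V) (hu : u ∈ U)
    (hx : x ∉ U) (hy : y ∉ U) (hxv : x ≠ v) (hyv : y ≠ v) :
    (σ * τ * swap u v).Adj x y := by
  rcases h with h | h
  · exact Or.inl (by rw [mul_mul_swap_apply_of_notMem_left hUV hσ hτ hτV hu hx hxv, h])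
  · exact Or.inr (by rw [mul_mul_swap_apply_of_notMem_left hUV hσ hτ hτV hu hy hyv, h])

end Merge

variable {G : Type*} [Group G]

def leftTranslate (σ : Perm G) (t : G) : Perm G := Equiv.mulLeft t * σ * (Equiv.mulLeft t)⁻¹

@[simp]
theorem leftTranslate_apply_mul (σ : Perm G) (t a : G) :
    σ.leftTranslate t (t * a) = t * σ a := by
  simp [leftTranslate]

end Equiv.Perm

open Equiv.Perm

section CayleyCycle

variable {G : Type*} [Group G] {S : Set G} {σ τ : Perm G} {U V : Set G}

/-- A Hamiltonian cycle of the subgraph of `Γ(G, S)` induced on `U`, given by its successor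
permutation. -/
structure IsCayleyCycleOn (S : Set G) (σ : Perm G) (U : Set G) : Prop where
  isCycleOn : σ.IsCycleOn U
  apply_of_notMem : ∀ x ∉ U, σ x = x
  inv_mul_apply_mem : ∀ x ∈ U, x⁻¹ * σ x ∈ S ∪ S⁻¹

theorem inv_mem_union_inv {x : G} (h : x ∈ S ∪ S⁻¹) : x⁻¹ ∈ S ∪ S⁻¹ := by
  simpa [or_comm] using h

theorem IsCayleyCycleOn.inv (h : IsCayleyCycleOn S σ U) : IsCayleyCycleOn S σ⁻¹ U where
  isCycleOn := h.isCycleOn.inv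
  apply_of_notMem x hx := by rw [inv_eq_iff_eq, h.apply_of_notMem x hx]
  inv_mul_apply_mem x hx := by
    have hy : σ⁻¹ x ∈ U := h.isCycleOn.inv.1.mapsTo hx
    have := inv_mem_union_inv (h.inv_mul_apply_mem _ hy)
    rwa [show σ (σ⁻¹ x) = x by simp, mul_inv_rev, inv_inv] at this

theorem IsCayleyCycleOn.leftTranslate (h : IsCayleyCycleOn S σ U) (t : G) :
    IsCayleyCycleOn S (σ.leftTranslate t) ((t * ·) '' U) where
  isCycleOn := by
    have := h.isCycleOn.conj (g := Equiv.mulLeft t)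
    rwa [Equiv.coe_mulLeft] at this
  apply_of_notMem x hx := by
    rw [← mul_inv_cancel_left t x, σ.leftTranslate_apply_mul, h.apply_of_notMem]
    exact fun hU => hx ⟨_, hU, mul_inv_cancel_left t x⟩
  inv_mul_apply_mem := by
    rintro _ ⟨a, ha, rfl⟩
    rw [σ.leftTranslate_apply_mul, mul_inv_rev, mul_assoc, inv_mul_cancel_left]
    exact h.inv_mul_apply_mem a ha

theorem IsCayleyCycleOn.mul_mul_swap [Finite G] [DecidableEq G] (hσ : IsCayleyCycleOn S σ U)
    (hτ : IsCayleyCycleOn S τ V) (hUV : Disjoint U V) {u v : G} (hu : u ∈ U) (hv : v ∈ V)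
    (huv : u⁻¹ * τ v ∈ S ∪ S⁻¹) (hvu : v⁻¹ * σ u ∈ S ∪ S⁻¹) :
    IsCayleyCycleOn S (σ * τ * swap u v) (U ∪ V) where
  isCycleOn := hσ.isCycleOn.mul_mul_swap hτ.isCycleOn hUV hσ.apply_of_notMem
    hτ.apply_of_notMem hu hv
  apply_of_notMem x hx := by
    rw [Set.mem_union, not_or] at hx
    rw [mul_mul_swap_apply_of_notMem_right hτ.apply_of_notMem hv hx.2 fun h => hx.1 (h ▸ hu),
      hσ.apply_of_notMem x hx.1]
  inv_mul_apply_mem := by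
    rintro x (hx | hx)
    · obtain rfl | hxu := eq_or_ne x u
      · rwa [mul_mul_swap_apply_left hUV hσ.apply_of_notMem hτ.isCycleOn.1.mapsTo hv]
      · rw [mul_mul_swap_apply_of_notMem_right hτ.apply_of_notMem hv
          (Set.disjoint_left.mp hUV hx) hxu]
        exact hσ.inv_mul_apply_mem x hx
    · obtain rfl | hxv := eq_or_ne x v
      · rwa [mul_mul_swap_apply_right hUV hτ.apply_of_notMem hu]
      · rw [mul_mul_swap_apply_of_notMem_left hUV hσ.apply_of_notMem hτ.apply_of_notMem
          hτ.isCycleOn.1.mapsTo hu (Set.disjoint_right.mp hUV hx) hxv]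
        exact hτ.inv_mul_apply_mem x hx

theorem IsCayleyCycleOn.exists_isHamCycle [Finite G] (h : IsCayleyCycleOn S σ Set.univ) :
    ∃ l : List G, IsHamCycle S l := by
  classical
  let _ := Fintype.ofFinite G
  have hσ : σ.IsCycleOn (Finset.univ : Finset G) := by simpa using h.isCycleOn
  have hN : (Finset.univ : Finset G).card = Nat.card G := by simp [Nat.card_eq_fintype_card]
  let x : ℕ → G := fun k => (σ ^ k) 1
  let step : ℕ → G := fun k => (x k)⁻¹ * x (k + 1)
  have hprod : ∀ k, ((List.range k).map step).prod = x k := by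
    intro k
    induction k with
    | zero => simp [x]
    | succ k ih => simp [List.range_succ, ih, step]
  have htake : ∀ k ≤ Nat.card G, (((List.range (Nat.card G)).map step).take k).prod = x k := by
    intro k hk
    rw [← List.map_take, List.take_range, min_eq_left hk, hprod]
  refine ⟨(List.range (Nat.card G)).map step, ?_, ?_, by simp, ?_⟩
  · simp only [List.mem_map, List.mem_range]
    rintro _ ⟨k, -, rfl⟩
    have := h.inv_mul_apply_mem (x k) trivial
    rw [← mul_apply, ← pow_succ'] at this
    simpa [step] using this
  · rw [← List.take_length (l := List.map step _), htake _ (by simp), List.length_map,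
      List.length_range, ← hN]
    exact hσ.pow_card_apply (Finset.mem_univ 1)
  · rw [List.length_map, List.length_range,
      List.map_congr_left fun k hk => htake k (List.mem_range.mp hk).le]
    refine List.Nodup.map_on (fun m hm n hn hmn => ?_) List.nodup_range
    rw [List.mem_range, ← hN] at hm hn
    exact ((hσ.pow_apply_eq_pow_apply (Finset.mem_univ 1)).mp hmn).eq_of_lt_of_lt hm hn

end CayleyCycle

section Gluing

variable {G : Type*} [Group G] {H : Subgroup G} {S : Set G} {rn : G} {ρ σ τ : Perm G}
  {W : Set (G ⧸ H)}

theorem eq_univ_of_forall_mul_mem_iff {T : Set G} (hT : Subgroup.closure T = ⊤) {U : Set G}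
    (hU : U.Nonempty) (h : ∀ s ∈ T, ∀ g, g * s ∈ U ↔ g ∈ U) : U = Set.univ := by
  let K : Subgroup G :=
    { carrier := {s | ∀ g, g * s ∈ U ↔ g ∈ U}
      one_mem' := by simp
      mul_mem' := fun ha hb g => by rw [← mul_assoc, hb, ha]
      inv_mem' := fun ha g => by rw [← ha, inv_mul_cancel_right] }
  have hK : ∀ s, s ∈ K := fun s =>
    (Subgroup.closure_le K).mpr h (hT ▸ Subgroup.mem_top s)
  obtain ⟨g₀, hg₀⟩ := hU
  exact Set.eq_univ_of_forall fun g => by simpa using (hK (g₀⁻¹ * g) g₀).mpr hg₀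

theorem exists_mk_mem_mk_mul_notMem (hgen : Subgroup.closure (insert rn (H : Set G)) = ⊤)
    (hrn : rn * rn = 1) (hW : W.Nonempty) (hWu : W ≠ Set.univ) :
    ∃ g : G, (g : G ⧸ H) ∈ W ∧ (↑(g * rn) : G ⧸ H) ∉ W := by
  by_contra! hclosed
  refine hWu (Set.eq_univ_of_forall fun A => ?_)
  obtain ⟨g, rfl⟩ := QuotientGroup.mk_surjective A
  obtain ⟨A₀, hA₀⟩ := hW
  obtain ⟨g₀, rfl⟩ := QuotientGroup.mk_surjective A₀
  have hU := eq_univ_of_forall_mul_mem_iff hgen (U := QuotientGroup.mk ⁻¹' W) ⟨g₀, hA₀⟩ <| by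
    rintro s (rfl | hs) x
    · refine ⟨fun hx => ?_, hclosed x⟩
      simpa [mul_assoc, hrn] using hclosed _ hx
    · simp [Set.mem_preimage, QuotientGroup.mk_mul_of_mem x hs]
  exact Set.mem_preimage.mp (hU ▸ Set.mem_univ g)

theorem mk_mul_mul_eq_of_commute {s : G} (hs : s ∈ H) (hc : Commute s rn) (x : G) :
    (↑(x * s * rn) : G ⧸ H) = ↑(x * rn) := by
  rw [mul_assoc, hc.eq, ← mul_assoc, QuotientGroup.mk_mul_of_mem _ hs]

/-- The vertex form of the badness of `C_H`. -/
def badVertices (H : Subgroup G) (rn : G) (ρ : Perm G) : Set G :=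
  {x | x ∈ H ∧ ¬Commute ((ρ⁻¹ x)⁻¹ * x) rn ∧ ¬Commute (x⁻¹ * ρ x) rn}

theorem exists_commute_of_ncard_badVertices_lt [Finite G] (hρ : ρ.IsCycleOn H) (t : G)
    (B : G ⧸ H) (h : (badVertices H rn ρ).ncard <
      Nat.card {x : G // (x : G ⧸ H) = t ∧ (↑(x * rn) : G ⧸ H) = B}) :
    ∃ a ∈ H, Commute (a⁻¹ * ρ a) rn ∧ (↑(t * a * rn) : G ⧸ H) = B := by
  by_contra! hno
  have hbad : ∀ x : {x : G // (x : G ⧸ H) = t ∧ (↑(x * rn) : G ⧸ H) = B},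
      t⁻¹ * x ∈ badVertices H rn ρ := by
    rintro ⟨x, hxt, hxB⟩
    have ha : t⁻¹ * x ∈ H := QuotientGroup.eq.mp hxt.symm
    set a := t⁻¹ * x
    have hta : t * a = x := mul_inv_cancel_left t x
    refine ⟨ha, fun hc => ?_, fun hc => hno a ha hc (by rwa [hta])⟩
    set b := ρ⁻¹ a
    have hb : b ∈ H := hρ.inv.apply_mem_iff.mpr ha
    have hρb : ρ b = a := by simp [b]
    refine hno b hb (hρb ▸ hc) ?_
    rw [← mk_mul_mul_eq_of_commute (mul_mem (inv_mem hb) ha) hc, mul_assoc t, mul_inv_cancel_left,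
      hta, hxB]
  have hinj : Function.Injective fun x => (⟨_, hbad x⟩ : badVertices H rn ρ) :=
    fun x y hxy => Subtype.ext (mul_left_cancel (congrArg Subtype.val hxy))
  have := Nat.card_le_card_of_injective _ hinj
  rw [Nat.card_coe_set_eq] at this
  omega

theorem image_mul_left_eq_preimage_mk (t : G) :
    (t * ·) '' (H : Set G) = QuotientGroup.mk ⁻¹' {(t : G ⧸ H)} := by
  ext x
  simp [Set.image_mul_left, QuotientGroup.eq, eq_comm (a := (x : G ⧸ H))]

theorem IsCayleyCycleOn.leftTranslate_coset (hρ : IsCayleyCycleOn S ρ H) (t : G) :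
    IsCayleyCycleOn S (ρ.leftTranslate t) (QuotientGroup.mk ⁻¹' {(t : G ⧸ H)}) :=
  image_mul_left_eq_preimage_mk t ▸ hρ.leftTranslate t

theorem IsCayleyCycleOn.exists_apply_mul_eq (hρ : IsCayleyCycleOn S ρ H) {a b : G} (ha : a ∈ H)
    (hab : ρ.Adj a b) (w : G) :
    ∃ τ : Perm G, IsCayleyCycleOn S τ (QuotientGroup.mk ⁻¹' {(w : G ⧸ H)}) ∧
      τ (w * (a⁻¹ * b)) = w ∧ ∃ t : G, (t : G ⧸ H) = w ∧ ∀ x, τ.Adj (t * x) (t * ρ x) := by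
  obtain ⟨c, rfl⟩ : ∃ c, w = c * a := ⟨w * a⁻¹, (inv_mul_cancel_right w a).symm⟩
  rw [mul_assoc c a, mul_inv_cancel_left, QuotientGroup.mk_mul_of_mem c ha]
  rcases hab with h | h
  · refine ⟨(ρ.leftTranslate c)⁻¹, (hρ.leftTranslate_coset c).inv, ?_, c, rfl,
      fun x => Or.inr ?_⟩
    · rw [inv_eq_iff_eq, ρ.leftTranslate_apply_mul, h]
    · rw [inv_eq_iff_eq, ρ.leftTranslate_apply_mul]
  · exact ⟨ρ.leftTranslate c, hρ.leftTranslate_coset c, by rw [ρ.leftTranslate_apply_mul, h], c,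
      rfl, fun x => Or.inl (ρ.leftTranslate_apply_mul c x)⟩

/-- The invariant of the splicing: `σ` is a Hamiltonian cycle through the cosets in `W` that
keeps, in each of them, the edges of a translate of `ρ` along which cosets outside `W` can still be
spliced in. -/
structure IsGluedCycle (S : Set G) (rn : G) (ρ : Perm G) (W : Set (G ⧸ H)) (σ : Perm G) :
    Prop where
  isCayleyCycleOn : IsCayleyCycleOn S σ (QuotientGroup.mk ⁻¹' W)
  exists_adj : ∀ A ∈ W, ∃ t : G, (t : G ⧸ H) = A ∧ ∀ a ∈ H, Commute (a⁻¹ * ρ a) rn →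
    (↑(t * a * rn) : G ⧸ H) ∉ W → σ.Adj (t * a) (t * ρ a)

theorem IsCayleyCycleOn.isGluedCycle_leftTranslate (hρ : IsCayleyCycleOn S ρ H) (t : G) :
    IsGluedCycle S rn ρ {(t : G ⧸ H)} (ρ.leftTranslate t) where
  isCayleyCycleOn := hρ.leftTranslate_coset t
  exists_adj _ hA := ⟨t, hA.symm, fun a _ _ _ => Or.inl (ρ.leftTranslate_apply_mul t a)⟩

theorem mk_apply_mul_eq_of_commute (hρ : ρ.IsCycleOn H) {a : G} (ha : a ∈ H)
    (hc : Commute (a⁻¹ * ρ a) rn) (t : G) : (↑(t * ρ a * rn) : G ⧸ H) = ↑(t * a * rn) := by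
  have hs : a⁻¹ * ρ a ∈ H := mul_mem (inv_mem ha) (hρ.apply_mem_iff.mpr ha)
  rw [← mk_mul_mul_eq_of_commute hs hc (t * a), mul_assoc t a, mul_inv_cancel_left]

/-- Trades the edges `u → u s` of `σ` and `u rn s → u rn` of `τ` for the `rn`-edges `u → u rn`
and `u rn s → u s`. -/
theorem IsGluedCycle.splice [Finite G] [DecidableEq G] (hσ : IsGluedCycle S rn ρ W σ)
    (hρ : ρ.IsCycleOn H) (hrn : rn * rn = 1) (hrnS : rn ∈ S) {B : G ⧸ H} (hB : B ∉ W)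
    {u s : G} (hu : (u : G ⧸ H) ∈ W) (hs : s ∈ H) (hsc : Commute s rn) (hσu : σ u = u * s)
    (huB : (↑(u * rn) : G ⧸ H) = B) (hτ : IsCayleyCycleOn S τ (QuotientGroup.mk ⁻¹' {B}))
    (hτv : τ (u * rn * s) = u * rn) {t : G} (ht : (t : G ⧸ H) = B)
    (hτadj : ∀ a, τ.Adj (t * a) (t * ρ a)) :
    IsGluedCycle S rn ρ (insert B W) (σ * τ * swap u (u * rn * s)) := by
  set v := u * rn * s
  have hv : (v : G ⧸ H) = B := by rw [QuotientGroup.mk_mul_of_mem _ hs, huB]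
  have hvrn : v * rn = u * s := by
    rw [mul_assoc, hsc.eq, ← mul_assoc, mul_assoc u, hrn, mul_one]
  have hUV : Disjoint (QuotientGroup.mk ⁻¹' W) (QuotientGroup.mk ⁻¹' {B} : Set G) :=
    Set.disjoint_left.mpr fun x hx hxB => hB (hxB ▸ hx)
  have hcoset : ∀ {t : G} {a : G}, a ∈ H → (↑(t * a) : G ⧸ H) = t :=
    fun ha => QuotientGroup.mk_mul_of_mem _ ha
  refine ⟨?_, ?_⟩
  · rw [Set.insert_eq, Set.preimage_union, Set.union_comm]
    refine hσ.isCayleyCycleOn.mul_mul_swap hτ hUV hu hv ?_ ?_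
    · rw [hτv, inv_mul_cancel_left]
      exact Or.inl hrnS
    · rw [hσu, ← hvrn, inv_mul_cancel_left]
      exact Or.inl hrnS
  · rintro A (rfl | hA)
    · refine ⟨t, ht, fun a ha hc hout => ?_⟩
      have hout' : (↑(t * a * rn) : G ⧸ H) ∉ W := fun h => hout (Or.inr h)
      have hne : ∀ x : G, (↑(x * rn) : G ⧸ H) ∉ W → x ≠ v := fun x hx h =>
        hx (by rw [h, hvrn, hcoset hs]; exact hu)
      have hnotW : ∀ x : G, (x : G ⧸ H) = t → x ∉ (QuotientGroup.mk ⁻¹' W : Set G) :=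
        fun x hx h => hB (ht ▸ hx ▸ h)
      exact (hτadj a).mul_mul_swap_of_notMem_left hUV hσ.isCayleyCycleOn.apply_of_notMem
        hτ.apply_of_notMem hτ.isCycleOn.1.mapsTo hu (hnotW _ (hcoset ha))
        (hnotW _ (hcoset (hρ.apply_mem_iff.mpr ha))) (hne _ hout')
        (hne _ (mk_apply_mul_eq_of_commute hρ ha hc t ▸ hout'))
    · obtain ⟨t', rfl, hadj⟩ := hσ.exists_adj A hA
      refine ⟨t', rfl, fun a ha hc hout => ?_⟩
      have hne : ∀ x : G, (↑(x * rn) : G ⧸ H) ∉ insert B W → x ≠ u := fun x hx h =>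
        hx (Or.inl (h ▸ huB))
      have hnotB : ∀ x : G, (x : G ⧸ H) = t' → x ∉ (QuotientGroup.mk ⁻¹' {B} : Set G) :=
        fun x hx h => hB ((Set.mem_singleton_iff.mp h) ▸ hx ▸ hA)
      exact (hadj a ha hc fun h => hout (Or.inr h)).mul_mul_swap_of_notMem_right
        hτ.apply_of_notMem hv (hnotB _ (hcoset ha))
        (hnotB _ (hcoset (hρ.apply_mem_iff.mpr ha))) (hne _ hout)
        (hne _ (mk_apply_mul_eq_of_commute hρ ha hc t' ▸ hout))

theorem IsGluedCycle.exists_insert [Finite G] (hσ : IsGluedCycle S rn ρ W σ)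
    (hρ : IsCayleyCycleOn S ρ H) (hrn : rn * rn = 1) (hrnS : rn ∈ S) {g : G}
    (hg : (g : G ⧸ H) ∈ W) (hgW : (↑(g * rn) : G ⧸ H) ∉ W)
    (hcount : (badVertices H rn ρ).ncard <
      Nat.card {x : G // (x : G ⧸ H) = g ∧ (↑(x * rn) : G ⧸ H) = ↑(g * rn)}) :
    ∃ σ' : Perm G, IsGluedCycle S rn ρ (insert (↑(g * rn)) W) σ' := by
  classical
  obtain ⟨t, ht, hadj⟩ := hσ.exists_adj _ hg
  obtain ⟨a, ha, hac, haB⟩ :=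
    exists_commute_of_ncard_badVertices_lt hρ.isCycleOn t _ (ht ▸ hcount)
  have hρa : ρ a ∈ H := hρ.isCycleOn.apply_mem_iff.mpr ha
  suffices key : ∀ p q : G, p ∈ H → q ∈ H → ρ.Adj p q → Commute (p⁻¹ * q) rn →
      σ (t * p) = t * q → (↑(t * p * rn) : G ⧸ H) = ↑(g * rn) →
      ∃ σ' : Perm G, IsGluedCycle S rn ρ (insert (↑(g * rn)) W) σ' by
    rcases hadj a ha hac (haB ▸ hgW) with h | h
    · exact key a (ρ a) ha hρa (Or.inl rfl) hac h haB
    · refine key (ρ a) a hρa ha (Or.inr rfl) ?_ h ?_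
      · simpa only [mul_inv_rev, inv_inv] using hac.inv_left
      · rw [mk_apply_mul_eq_of_commute hρ.isCycleOn ha hac, haB]
  intro p q hp hq hpq hc hσp hpB
  obtain ⟨τ, hτ, hτv, tB, htB, hτadj⟩ := hρ.exists_apply_mul_eq hp hpq (t * p * rn)
  rw [hpB] at hτ htB
  exact ⟨_, hσ.splice hρ.isCycleOn hrn hrnS hgW (by rwa [QuotientGroup.mk_mul_of_mem t hp, ht])
    (mul_mem (inv_mem hp) hq) hc (by rw [hσp, mul_assoc, mul_inv_cancel_left]) hpB hτ hτv htB hτadj⟩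

theorem exists_isCayleyCycleOn_univ [Finite G]
    (hgen : Subgroup.closure (insert rn (H : Set G)) = ⊤) (hrn : rn * rn = 1) (hrnS : rn ∈ S)
    (hρ : IsCayleyCycleOn S ρ H)
    (hbad : ∀ g : G, (↑(g * rn) : G ⧸ H) ≠ g → (badVertices H rn ρ).ncard <
      Nat.card {x : G // (x : G ⧸ H) = g ∧ (↑(x * rn) : G ⧸ H) = ↑(g * rn)}) :
    ∃ σ : Perm G, IsCayleyCycleOn S σ Set.univ := by
  have : Nonempty {W : Set (G ⧸ H) // W.Nonempty ∧ ∃ σ, IsGluedCycle S rn ρ W σ} :=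
    ⟨⟨_, Set.singleton_nonempty _, _, hρ.isGluedCycle_leftTranslate 1⟩⟩
  obtain ⟨⟨W, hW, σ, hσ⟩, hmax⟩ := Finite.exists_max fun W :
    {W : Set (G ⧸ H) // W.Nonempty ∧ ∃ σ, IsGluedCycle S rn ρ W σ} => W.1.ncard
  obtain rfl : W = Set.univ := by
    by_contra hWu
    obtain ⟨g, hg, hgW⟩ := exists_mk_mem_mk_mul_notMem hgen hrn hW hWu
    obtain ⟨σ', hσ'⟩ :=
      hσ.exists_insert hρ hrn hrnS hg hgW (hbad g fun h => hgW (h ▸ hg))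
    have := hmax ⟨_, Set.insert_nonempty _ _, σ', hσ'⟩
    dsimp only at this
    rw [Set.ncard_insert_of_notMem hgW] at this
    omega
  exact ⟨σ, hσ.isCayleyCycleOn⟩

end Gluing

theorem List.Nodup.mem_of_natCard_le {α : Type*} [Finite α] {L : List α} (hL : L.Nodup)
    (hlen : Nat.card α ≤ L.length) (a : α) : a ∈ L := by
  obtain ⟨i, rfl⟩ := ((List.nodup_iff_injective_get.mp hL).bijective_of_nat_card_le
    (by simpa using hlen)).2 a
  exact List.get_mem L i

section HamCycleList

variable {G : Type*} [Group G] {H : Subgroup G} {T : Set H} {l : List H} {k : ℕ}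

def cycleVertices (l : List H) : List G :=
  (List.range l.length).map fun k => ((l.take k).prod : G)

theorem IsHamCycle.nodup_cycleVertices (hl : IsHamCycle T l) : (cycleVertices l).Nodup := by
  have := hl.2.2.2.map Subtype.val_injective
  rwa [List.map_map] at this

theorem IsHamCycle.exists_take_prod_eq [Finite G] (hl : IsHamCycle T l) {x : G} (hx : x ∈ H) :
    ∃ k < l.length, ((l.take k).prod : G) = x := by
  obtain ⟨k, hk, hkx⟩ :=
    List.mem_map.mp (hl.2.2.2.mem_of_natCard_le (by simp [hl.2.2.1]) ⟨x, hx⟩)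
  exact ⟨k, List.mem_range.mp hk, by rw [hkx]⟩

theorem IsHamCycle.mem_cycleVertices_iff [Finite G] (hl : IsHamCycle T l) {x : G} :
    x ∈ cycleVertices l ↔ x ∈ H := by
  simp only [cycleVertices, List.mem_map, List.mem_range]
  constructor
  · rintro ⟨k, -, rfl⟩
    exact SetLike.coe_mem _
  · exact hl.exists_take_prod_eq

theorem IsHamCycle.take_succ_mod_prod (hl : IsHamCycle T l) (hk : k < l.length) :
    (l.take ((k + 1) % l.length)).prod = (l.take k).prod * l[k] := by
  rw [← List.prod_take_succ _ _ hk]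
  rcases Nat.lt_or_ge (k + 1) l.length with h | h
  · rw [Nat.mod_eq_of_lt h]
  · rw [show k + 1 = l.length by omega, Nat.mod_self, List.take_zero, List.take_length,
      List.prod_nil, hl.2.1]

variable [DecidableEq G]

def hamCyclePerm (l : List H) : Perm G := (cycleVertices l).formPerm

theorem IsHamCycle.isCycleOn_hamCyclePerm [Finite G] (hl : IsHamCycle T l) :
    (hamCyclePerm l).IsCycleOn H :=
  Set.ext (fun _ => hl.mem_cycleVertices_iff) ▸ hl.nodup_cycleVertices.isCycleOn_formPerm

theorem IsHamCycle.hamCyclePerm_apply (hl : IsHamCycle T l) (hk : k < l.length) :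
    hamCyclePerm l ((l.take k).prod : G) = ((l.take ((k + 1) % l.length)).prod : G) := by
  have := List.formPerm_apply_getElem _ hl.nodup_cycleVertices k
    (by simpa [cycleVertices] using hk)
  simp only [cycleVertices, List.getElem_map, List.getElem_range, List.length_map,
    List.length_range] at this
  exact this

theorem IsHamCycle.inv_mul_hamCyclePerm_apply (hl : IsHamCycle T l) (hk : k < l.length) :
    ((l.take k).prod : G)⁻¹ * hamCyclePerm l ((l.take k).prod : G) = l[k] := by
  rw [hl.hamCyclePerm_apply hk, hl.take_succ_mod_prod hk]
  simp

theorem IsHamCycle.isCayleyCycleOn_hamCyclePerm [Finite G] {S : Set G} (hl : IsHamCycle T l)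
    (hT : ∀ x ∈ T, (x : G) ∈ S) : IsCayleyCycleOn S (hamCyclePerm l) H where
  isCycleOn := hl.isCycleOn_hamCyclePerm
  apply_of_notMem _ hx := List.formPerm_apply_of_notMem (mt hl.mem_cycleVertices_iff.mp hx)
  inv_mul_apply_mem x hx := by
    obtain ⟨k, hk, rfl⟩ := hl.exists_take_prod_eq hx
    rw [hl.inv_mul_hamCyclePerm_apply hk]
    rcases hl.1 _ (List.getElem_mem hk) with h | h
    · exact Or.inl (hT _ h)
    · exact Or.inr (by simpa using hT _ h)

theorem IsHamCycle.hamCyclePerm_apply_mem_badVertices_iff (hl : IsHamCycle T l) (rn : G)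
    (hk : k < l.length) :
    hamCyclePerm l ((l.take k).prod : G) ∈ badVertices H rn (hamCyclePerm l) ↔
      ¬Commute (l[k] : G) rn ∧
        ¬Commute (l[(k + 1) % l.length]'(Nat.mod_lt _ (by omega)) : G) rn := by
  set y := hamCyclePerm l ((l.take k).prod : G)
  have hy : y = ((l.take ((k + 1) % l.length)).prod : G) := hl.hamCyclePerm_apply hk
  have hin : ((hamCyclePerm l)⁻¹ y)⁻¹ * y = l[k] := by
    simp only [y, Perm.coe_inv, symm_apply_apply]
    exact hl.inv_mul_hamCyclePerm_apply hk
  have hout : y⁻¹ * hamCyclePerm l y = l[(k + 1) % l.length]'(Nat.mod_lt _ (by omega)) := by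
    rw [hy]
    exact hl.inv_mul_hamCyclePerm_apply (Nat.mod_lt _ (by omega))
  change y ∈ H ∧ _ ∧ _ ↔ _
  rw [hin, hout, hy, and_iff_right (SetLike.coe_mem _)]

/-- With `pₖ = (l.take k).prod`, position `i` of the badness is the vertex `pᵢ₊₁ = ρ pᵢ`, which
lies between the edges `i` and `i + 1` of `C_H`. -/
theorem IsHamCycle.ncard_badVertices_le [Finite G] (hl : IsHamCycle T l) (rn : G) :
    (badVertices H rn (hamCyclePerm l)).ncard ≤ Nat.card {i : Fin l.length //
      ¬Commute (l.get i : G) rn ∧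
      ¬Commute (l.get ⟨((i : ℕ) + 1) % l.length, Nat.mod_lt _ i.pos⟩ : G) rn} := by
  rw [← Nat.card_coe_set_eq]
  refine Nat.card_le_card_of_surjective
    (fun i => ⟨_, (hl.hamCyclePerm_apply_mem_badVertices_iff rn i.1.2).mpr i.2⟩) ?_
  rintro ⟨y, hy⟩
  obtain ⟨k, hk, hky⟩ := hl.exists_take_prod_eq (hl.isCycleOn_hamCyclePerm.inv.1.mapsTo hy.1)
  have hρk : hamCyclePerm l ((l.take k).prod : G) = y := by rw [hky]; simp
  refine ⟨⟨⟨k, hk⟩, ?_⟩, Subtype.ext hρk⟩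
  simpa using (hl.hamCyclePerm_apply_mem_badVertices_iff rn hk).mp (hρk ▸ hy)

end HamCycleList

/-- Corollary 3.7. Let `G` be a finite group with generating set
`S = {r₁,…,rₙ}` where `rₙ` has order two, `H = ⟨r₁,…,r_{n-1}⟩`; the components of
`Γ(G, S \\ {rₙ})` have the left cosets of `H` as vertex sets, and `c(A,B)` counts the
edges labeled `rₙ` joining the components on the cosets `A` and `B`. If
`Γ(H, S \\ {rₙ})` has a Hamiltonian cycle `C_H` (a cyclic list `lH` of edge labels)
whose badness — the number of positions at which two (cyclically) consecutive edge
labels both fail to commute with `rₙ` — is strictly less than `c(A,B)` for every pair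
with `c(A,B) > 0`, then `Γ(G,S)` has a Hamiltonian cycle. -/
theorem stmt12 {G : Type*} [Group G] [Finite G] (n : ℕ) (r : Fin (n + 1) → G)
    (hgen : Subgroup.closure (Set.range r) = ⊤)
    (hord : orderOf (r (Fin.last n)) = 2)
    (H : Subgroup G)
    (hH : H = Subgroup.closure (Set.range fun i : Fin n => r i.castSucc))
    (lH : List H)
    (hCH : IsHamCycle {x : H | ∃ i : Fin n, (x : G) = r i.castSucc} lH)
    (bad : ℕ)
    (hbad : bad = Nat.card {i : Fin lH.length //
      ¬ Commute (lH.get i : G) (r (Fin.last n)) ∧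
      ¬ Commute (lH.get ⟨((i : ℕ) + 1) % lH.length, Nat.mod_lt _ i.pos⟩ : G) (r (Fin.last n))})
    (c : G ⧸ H → G ⧸ H → ℕ)
    (hc : ∀ A B, c A B = Nat.card {g : G // QuotientGroup.mk g = A ∧
      QuotientGroup.mk (g * r (Fin.last n)) = B})
    (hlt : ∀ A B, 0 < c A B → bad < c A B) :
    ∃ l : List G, IsHamCycle (Set.range r) l := by
  have hrn : r (Fin.last n) * r (Fin.last n) = 1 := by rw [← sq, ← hord, pow_orderOf_eq_one]
  have hgen' : Subgroup.closure (insert (r (Fin.last n)) (H : Set G)) = ⊤ := by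
    refine eq_top_iff.mpr (hgen ▸ (Subgroup.closure_le _).mpr ?_)
    rintro _ ⟨i, rfl⟩
    refine Subgroup.subset_closure ?_
    induction i using Fin.lastCases with
    | last => exact Set.mem_insert _ _
    | cast j => exact Set.mem_insert_of_mem _ (hH ▸ Subgroup.subset_closure ⟨j, rfl⟩)
  classical
  have hρ := hCH.isCayleyCycleOn_hamCyclePerm (S := Set.range r) <| by
    rintro x ⟨i, hi⟩
    exact ⟨i.castSucc, hi.symm⟩
  obtain ⟨σ, hσ⟩ := exists_isCayleyCycleOn_univ hgen' hrn (Set.mem_range_self _) hρ fun g _ => by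
    have hpos : 0 < c g ↑(g * r (Fin.last n)) := by
      rw [hc]
      exact Nat.card_pos_iff.mpr ⟨⟨⟨g, rfl, rfl⟩⟩, inferInstance⟩
    rw [← hc]
    exact (hCH.ncard_badVertices_le _).trans_lt (hbad ▸ hlt _ _ hpos)
  exact hσ.exists_isHamCycle
end
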